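/- arXiv:math/0503020 — 10 statements merged into one kernel-verified Lean document; each statement's English description precedes it below -/
import Mathlib

section
/- Let n, i, r, M be integers with n ≥ 2, 1 < i ≤ n, 0 ≤ r ≤ i, r ≡ i (mod 2) and M = (i−r)/2. Then the cardinality of J_r(i) equals C(n−r, M) − C(n−r, M−1), where C(·,·) denotes the binomial coefficient and C(n−r, M−1) is taken to be 0 when M = 0. -/
/-!
Write `N = n - r`; the parity assumption gives `i = r + 2M`. Reflecting `j_s ↦ n - j_{M-1-s}`
turns `J_r(i)` into the set `T(N, M)` of strictly increasing sequences `f` with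
`2s + 1 ≤ f_s < N` (0-indexed), a ballot condition. Splitting these by whether the last entry
equals `N - 1` gives the Pascal recurrence `T(N+1, m+1) = T(N, m+1) + T(N, m)`, which
`C(N, m+1) - C(N, m)` also satisfies; the boundary cases are `T(N, 0) = 1` and
`T(2m+1, m+1) = 0`, matching `C(2m+1, m+1) = C(2m+1, m)`.
-/

open Finset

theorem Fin.strictMono_snoc {α : Type*} [Preorder α] {n : ℕ} {f : Fin n → α} {a : α} :
    StrictMono (Fin.snoc f a : Fin (n + 1) → α) ↔ StrictMono f ∧ ∀ i, f i < a := by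
  rw [← Fin.insertNth_last', Fin.strictMono_insertNth_iff]
  simp [Fin.castSucc_lt_last, (Fin.castSucc_lt_last _).not_ge]

open Classical in
noncomputable def ballotSeqs (N M : ℕ) : Finset (Fin M → ℤ) :=
  {f ∈ Fintype.piFinset fun s : Fin M => Ico (2 * (s : ℤ) + 1) N | StrictMono f}

theorem mem_ballotSeqs {N M : ℕ} {f : Fin M → ℤ} :
    f ∈ ballotSeqs N M ↔ StrictMono f ∧ ∀ s : Fin M, 2 * (s : ℤ) + 1 ≤ f s ∧ f s < N := by
  simp [ballotSeqs, and_comm]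

theorem card_ballotSeqs_zero (N : ℕ) : #(ballotSeqs N 0) = 1 :=
  card_eq_one.2 ⟨finZeroElim, by
    ext f
    simp [mem_ballotSeqs, Subsingleton.strictMono, Subsingleton.elim f finZeroElim]⟩

theorem snoc_mem_ballotSeqs {N m a : ℕ} {g : Fin m → ℤ} :
    Fin.snoc g (a : ℤ) ∈ ballotSeqs N (m + 1) ↔ g ∈ ballotSeqs a m ∧ 2 * m + 1 ≤ a ∧ a < N := by
  simp only [mem_ballotSeqs, Fin.strictMono_snoc, Fin.forall_fin_succ', Fin.snoc_castSucc,
    Fin.snoc_last, Fin.val_castSucc, Fin.val_last]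
  constructor
  · rintro ⟨⟨hg, hlt⟩, hb, ha, haN⟩
    exact ⟨⟨hg, fun s => ⟨(hb s).1, hlt s⟩⟩, by omega, by omega⟩
  · rintro ⟨⟨hg, hb⟩, ha, haN⟩
    exact ⟨⟨hg, fun s => (hb s).2⟩, fun s => ⟨(hb s).1, by have := (hb s).2; omega⟩, by omega,
      by omega⟩

theorem ballotSeqs_eq_empty {N M : ℕ} (h : N < 2 * M) : ballotSeqs N M = ∅ := by
  obtain _ | m := M
  · omega
  refine eq_empty_of_forall_notMem fun f hf => ?_
  have := (mem_ballotSeqs.1 hf).2 (Fin.last m)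
  simp only [Fin.val_last] at this
  omega

theorem filter_last_lt_ballotSeqs (N m : ℕ) :
    {f ∈ ballotSeqs (N + 1) (m + 1) | f (Fin.last m) < (N : ℤ)} = ballotSeqs N (m + 1) := by
  ext f
  simp only [mem_filter, mem_ballotSeqs]
  constructor
  · rintro ⟨⟨hf, hb⟩, hlast⟩
    exact ⟨hf, fun s => ⟨(hb s).1, (hf.monotone (Fin.le_last s)).trans_lt hlast⟩⟩
  · rintro ⟨hf, hb⟩
    exact ⟨⟨hf, fun s => ⟨(hb s).1, by have := (hb s).2; push_cast; omega⟩⟩, (hb _).2⟩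

theorem card_filter_last_eq_ballotSeqs {N m : ℕ} (h : 2 * m + 1 ≤ N) :
    #{f ∈ ballotSeqs (N + 1) (m + 1) | ¬ f (Fin.last m) < (N : ℤ)} = #(ballotSeqs N m) := by
  have last_eq {f} (hf : f ∈ ballotSeqs (N + 1) (m + 1)) (hN : ¬ f (Fin.last m) < (N : ℤ)) :
      f (Fin.last m) = N := by
    have := ((mem_ballotSeqs.1 hf).2 (Fin.last m)).2
    push_cast at this
    omega
  refine card_nbij' Fin.init (Fin.snoc · (N : ℤ)) (fun f hf => ?_) (fun g hg => ?_)
    (fun f hf => ?_) (fun g _ => Fin.init_snoc ..)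
  · obtain ⟨hmem, hN⟩ := mem_filter.1 hf
    have hlast := last_eq hmem hN
    rw [← Fin.snoc_init_self f, hlast, snoc_mem_ballotSeqs] at hmem
    exact hmem.1
  · simp only [coe_filter, Set.mem_ofPred_eq, snoc_mem_ballotSeqs, Fin.snoc_last]
    exact ⟨⟨hg, h, N.lt_succ_self⟩, lt_irrefl _⟩
  · obtain ⟨hmem, hN⟩ := mem_filter.1 hf
    dsimp only
    rw [← last_eq hmem hN, Fin.snoc_init_self]

theorem card_ballotSeqs_succ_succ {N m : ℕ} (h : 2 * m + 1 ≤ N) :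
    #(ballotSeqs (N + 1) (m + 1)) = #(ballotSeqs N (m + 1)) + #(ballotSeqs N m) := by
  rw [← card_filter_add_card_filter_not (fun f : Fin (m + 1) → ℤ => f (Fin.last m) < (N : ℤ)),
    filter_last_lt_ballotSeqs, card_filter_last_eq_ballotSeqs h]

theorem card_ballotSeqs_add_choose {N m : ℕ} (h : 2 * m + 1 ≤ N) :
    #(ballotSeqs N (m + 1)) + N.choose m = N.choose (m + 1) := by
  induction N generalizing m with
  | zero => omega
  | succ N ih =>
    obtain hN | hN := (show 2 * m + 1 ≤ N ∨ N = 2 * m from by omega)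
    · rw [card_ballotSeqs_succ_succ hN, Nat.choose_succ_succ' N m]
      have ih_m := ih hN
      cases m with
      | zero =>
        simp only [card_ballotSeqs_zero, Nat.choose_zero_right] at ih_m ⊢
        omega
      | succ m =>
        have ih_pred := ih (m := m) (by omega)
        rw [Nat.choose_succ_succ' N m]
        omega
    · subst hN
      rw [ballotSeqs_eq_empty (by omega), card_empty, zero_add, Nat.choose_symm_half]

theorem natCard_eq_card_ballotSeqs (n i r M : ℕ) (h : i = r + 2 * M) :
    Nat.card {j : Fin M → ℤ // StrictMono j ∧
        (∀ s : Fin M, (r : ℤ) < j s ∧ j s ≤ (n : ℤ)) ∧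
        (∀ s : Fin M, j s ≤ (n : ℤ) - (i : ℤ) + (r : ℤ) + 2 * ((s.1 : ℤ) + 1) - 1)} =
      #(ballotSeqs (n - r) M) := by
  subst h
  rw [← Nat.card_eq_finsetCard]
  refine Nat.card_congr
    { toFun := fun j => ⟨fun s => n - j.1 s.rev, mem_ballotSeqs.2 ⟨fun a b hab => ?_, fun s => ?_⟩⟩
      invFun := fun f => ⟨fun s => n - f.1 s.rev, fun a b hab => ?_, fun s => ?_, fun s => ?_⟩
      left_inv := fun j => by simp
      right_inv := fun f => by simp }
  · have := j.2.1 (Fin.rev_lt_rev.2 hab)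
    dsimp only
    omega
  · have := j.2.2.1 s.rev
    have := j.2.2.2 s.rev
    have := Fin.val_rev s
    omega
  · have := (mem_ballotSeqs.1 f.2).1 (Fin.rev_lt_rev.2 hab)
    dsimp only
    omega
  · have := (mem_ballotSeqs.1 f.2).2 s.rev
    dsimp only
    omega
  · have := (mem_ballotSeqs.1 f.2).2 s.rev
    have := Fin.val_rev s
    dsimp only
    omega

theorem card_Jri_C_general (n i r M : ℕ) (hin : i ≤ n)
    (hpar : r % 2 = i % 2) (hM : M = (i - r) / 2) :
    (Nat.card {j : Fin M → ℤ // StrictMono j ∧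
        (∀ s : Fin M, (r : ℤ) < j s ∧ j s ≤ (n : ℤ)) ∧
        (∀ s : Fin M, j s ≤ (n : ℤ) - (i : ℤ) + (r : ℤ) + 2 * ((s.1 : ℤ) + 1) - 1)} : ℤ) =
      ((n - r).choose M : ℤ) - (if M = 0 then 0 else ((n - r).choose (M - 1) : ℤ)) := by
  obtain _ | m := M
  · simp [Subsingleton.strictMono]
  rw [natCard_eq_card_ballotSeqs n i r (m + 1) (by omega),
    ← card_ballotSeqs_add_choose (N := n - r) (m := m) (by omega)]
  simp

/-- For `n ≥ 2`, `1 < i ≤ n`, `0 ≤ r ≤ i` with `r ≡ i (mod 2)` and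
`M = (i-r)/2`, the set `J_r(i)` of strictly increasing integer sequences
`r < j_1 < ⋯ < j_M ≤ n` with `j_s ≤ n - i + r + 2s - 1` has cardinality
`C(n-r, M) - C(n-r, M-1)` (where `C(n-r, M-1)` is taken to be `0` when `M = 0`). -/
theorem card_Jri_C (n i r M : ℕ) (hn : 2 ≤ n) (hi : 1 < i) (hin : i ≤ n)
    (hri : r ≤ i) (hpar : r % 2 = i % 2) (hM : M = (i - r) / 2) :
    (Nat.card {j : Fin M → ℤ // StrictMono j ∧
        (∀ s : Fin M, (r : ℤ) < j s ∧ j s ≤ (n : ℤ)) ∧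
        (∀ s : Fin M, j s ≤ (n : ℤ) - (i : ℤ) + (r : ℤ) + 2 * ((s.1 : ℤ) + 1) - 1)} : ℤ) =
      ((n - r).choose M : ℤ) - (if M = 0 then 0 else ((n - r).choose (M - 1) : ℤ)) :=
  card_Jri_C_general n i r M hin hpar hM
end

section
/- (Type C_n.) The map 𝐣 ↦ π_r(𝐣) from J_r(i) to P_q is injective. -/
noncomputable section

/-- The ℓ-weight lattice `P_q`, realized concretely as the additive group of
finitely supported functions on pairs (node index, spectral parameter);
the fundamental ℓ-weight `ω_{j,a}` corresponds to the indicator of `(j,a)`. -/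
abbrev Pq : Type := (ℤ × ℂ) →₀ ℤ

/-- The fundamental ℓ-weight `ω_{j,a}` (in additive notation), with the
convention `ω_{j,a} = 0` (the identity element) unless `1 ≤ j ≤ n`. -/
def lomega (n : ℕ) (j : ℤ) (a : ℂ) : Pq :=
  if 1 ≤ j ∧ j ≤ (n : ℤ) then Finsupp.single (j, a) 1 else 0

/-- Type `C_n`: `π_r(j,s) = ω_{j, q^{i+j-2s-2r}}^{-1} · ω_{j, q^{2n+2-i-j+2s}}`
(written additively). -/
def piC1 (n i r : ℕ) (q : ℂ) (j s : ℤ) : Pq :=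
  -lomega n j (q ^ ((i : ℤ) + j - 2 * s - 2 * (r : ℤ))) +
    lomega n j (q ^ (2 * (n : ℤ) + 2 - (i : ℤ) - j + 2 * s))

/-- Type `C_n`: `π_r(𝐣) = ω_{r, q^{r-i}} ∏_{s=1}^{M} π_r(j_s - 1, s-1) π_r(j_s, s)^{-1}`
(written additively), for a sequence `𝐣` given by `j 0, …, j (M-1)` (0-based). -/
def piC (n i r M : ℕ) (q : ℂ) (j : ℕ → ℤ) : Pq :=
  lomega n (r : ℤ) (q ^ ((r : ℤ) - (i : ℤ))) +
    ∑ s ∈ Finset.range M,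
      (piC1 n i r q (j s - 1) (s : ℤ) - piC1 n i r q (j s) ((s : ℤ) + 1))

/-- Membership in `J_r(i)`: `𝐣` is strictly increasing with `r < j_s ≤ n` and
`j_s ≤ n - i + r + 2s - 1` (1-based `s`), recorded for the 0-based entries
`j 0, …, j (M-1)`. -/
def memJC (n i r M : ℕ) (j : ℕ → ℤ) : Prop :=
  (∀ s t, s < t → t < M → j s < j t) ∧
  (∀ s < M, (r : ℤ) < j s ∧ j s ≤ (n : ℤ)) ∧
  (∀ s < M, j s ≤ (n : ℤ) - (i : ℤ) + (r : ℤ) + 2 * ((s : ℤ) + 1) - 1)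


/-- Coefficient of `lomega` at a point. -/
lemma lomega_apply (n : ℕ) (m : ℤ) (a : ℂ) (k : ℤ × ℂ) :
    lomega n m a k = if (1 ≤ m ∧ m ≤ (n : ℤ)) ∧ (m, a) = k then 1 else 0 := by
  unfold lomega
  split_ifs with h1 h2 h3 <;> simp_all [Finsupp.single_apply]

/-- The coefficient of `piC` at the key `(c, q^{2n+4-i-c+2s})`. -/
lemma piC_coeff (n i r M : ℕ) (q : ℂ)
    (hpow : ∀ a b : ℤ, (q ^ a = q ^ b) = (a = b))
    (u : ℕ → ℤ) (hu : memJC n i r M u)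
    (s : ℕ) (hs : s < M) (c : ℤ) (hc1 : (r : ℤ) < c) (hc2 : c ≤ (n : ℤ))
    (hc3 : c ≤ (n : ℤ) - (i : ℤ) + (r : ℤ) + 2 * (s : ℤ) + 1) :
    (piC n i r M q u) (c, q ^ (2 * (n : ℤ) + 4 - (i : ℤ) - c + 2 * (s : ℤ))) =
      (if s + 1 < M then (if u (s + 1) = c + 1 then 1 else 0) else 0) -
      (if u s = c then 1 else 0) := by
  obtain ⟨hmono, hrange, hbd⟩ := hu
  simp only [piC, Finsupp.add_apply, Finsupp.finset_sum_apply]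
  have hbase : lomega n (r : ℤ) (q ^ ((r : ℤ) - (i : ℤ)))
      (c, q ^ (2 * (n : ℤ) + 4 - (i : ℤ) - c + 2 * (s : ℤ))) = 0 := by
    rw [lomega_apply, if_neg]
    rintro ⟨-, h2⟩
    have := congrArg Prod.fst h2
    simp only at this
    omega
  have hterm : ∀ t ∈ Finset.range M,
      (piC1 n i r q (u t - 1) (t : ℤ) - piC1 n i r q (u t) ((t : ℤ) + 1))
        (c, q ^ (2 * (n : ℤ) + 4 - (i : ℤ) - c + 2 * (s : ℤ)))
      = (if t = s + 1 then (if u t = c + 1 then (1 : ℤ) else 0) else 0)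
        - (if t = s then (if u t = c then (1 : ℤ) else 0) else 0) := by
    intro t ht
    rw [Finset.mem_range] at ht
    have hb := hbd t ht
    have hr := hrange t ht
    simp only [Finsupp.sub_apply, piC1, Finsupp.add_apply, Finsupp.neg_apply,
      lomega_apply, Prod.mk.injEq, hpow]
    split_ifs <;> omega
  rw [Finset.sum_congr rfl hterm, Finset.sum_sub_distrib, hbase, zero_add,
    Finset.sum_ite_eq' (Finset.range M) (s + 1) (fun t => if u t = c + 1 then (1 : ℤ) else 0),
    Finset.sum_ite_eq' (Finset.range M) s (fun t => if u t = c then (1 : ℤ) else 0)]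
  simp [Finset.mem_range, hs]

/-- type C_n: the map `𝐣 ↦ π_r(𝐣)` from `J_r(i)` to `P_q` is
injective. -/
theorem piC_injective (n i r M : ℕ) (q : ℂ) (hn : 2 ≤ n) (hq : q ≠ 0)
    (hroot : ∀ k : ℕ, k ≠ 0 → q ^ k ≠ 1) (hi : 1 < i) (hin : i ≤ n)
    (hri : r ≤ i) (hpar : r % 2 = i % 2) (hM : M = (i - r) / 2)
    (j j' : ℕ → ℤ) (hj : memJC n i r M j) (hj' : memJC n i r M j')
    (heq : piC n i r M q j = piC n i r M q j') :
    ∀ s < M, j s = j' s := by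
  have key : ∀ c : ℤ, 0 ≤ c → q ^ c = 1 → c = 0 := by
    intro c hc h
    lift c to ℕ using hc
    rw [zpow_natCast] at h
    by_contra hne
    exact hroot c (fun h0 => hne (by simp [h0])) h
  have zinj : ∀ a b : ℤ, q ^ a = q ^ b → a = b := by
    intro a b hab
    have h1 : q ^ (a - b) = 1 := by
      rw [zpow_sub₀ hq, hab, div_self (zpow_ne_zero b hq)]
    rcases le_total b a with h | h
    · have := key (a - b) (by omega) h1; omega
    · have h2 : q ^ (b - a) = 1 := by
        rw [show b - a = -(a - b) by ring, zpow_neg, h1, inv_one]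
      have := key (b - a) (by omega) h2; omega
  have hpow : ∀ a b : ℤ, (q ^ a = q ^ b) = (a = b) :=
    fun a b => propext ⟨zinj a b, fun h => by rw [h]⟩
  have step : ∀ s, s < M → (∀ t, s < t → t < M → j t = j' t) → j s = j' s := by
    intro s hs ihs
    have hc1 : (r : ℤ) < j s := (hj.2.1 s hs).1
    have hc2 : j s ≤ (n : ℤ) := (hj.2.1 s hs).2
    have hc3 : j s ≤ (n : ℤ) - (i : ℤ) + (r : ℤ) + 2 * (s : ℤ) + 1 := by
      have := hj.2.2 s hs; omega
    have hL := piC_coeff n i r M q hpow j hj s hs (j s) hc1 hc2 hc3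
    have hR := piC_coeff n i r M q hpow j' hj' s hs (j s) hc1 hc2 hc3
    rw [heq, hR] at hL
    by_cases hsM : s + 1 < M
    · rw [if_pos hsM, if_pos hsM, ihs (s + 1) (by omega) hsM] at hL
      split_ifs at hL <;> omega
    · rw [if_neg hsM, if_neg hsM] at hL
      split_ifs at hL <;> omega
  have all : ∀ d s, s < M → M - s ≤ d → j s = j' s := by
    intro d
    induction d with
    | zero => intro s hs h; omega
    | succ d ih =>
      intro s hs h
      exact step s hs (fun t h1 h2 => ih t h2 (by omega))
  exact fun s hs => all M s hs (by omega)
end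
end

section
/- (Type C_n, Weyl group computation.) For all integers r, j with 2 ≤ r ≤ n and r−1 ≤ j ≤ n−1, the linear map w_{r,j} satisfies w_{r,j}(ω_r) = ω_{r−2} + α_j. -/
/-- The simple reflection `s_i` of type `C_n` acting on coordinate vectors
(coordinates indexed `1, …, n`): for `i < n` it swaps the `i`-th and `(i+1)`-th
coordinates, and `s_n` changes the sign of the `n`-th coordinate. -/
def refC (n : ℕ) (i : ℤ) (x : ℤ → ℝ) : ℤ → ℝ :=
  if i ≤ (n : ℤ) - 1 then
    fun t => if t = i then x (i + 1) else if t = i + 1 then x i else x t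
  else
    fun t => if t = (n : ℤ) then -x (n : ℤ) else x t

/-- The fundamental weight `ω_r = ε_1 + ⋯ + ε_r` (with `ω_0 = 0`). -/
def omegaW (r : ℤ) : ℤ → ℝ := fun t => if 1 ≤ t ∧ t ≤ r then 1 else 0

/-- The simple root `α_j` of type `C_n`: `α_j = ε_j - ε_{j+1}` for `j < n`
and `α_n = 2 ε_n`. -/
def alphaC (n : ℕ) (j : ℤ) : ℤ → ℝ := fun t =>
  if j ≤ (n : ℤ) - 1 then (if t = j then 1 else if t = j + 1 then -1 else 0)
  else (if t = (n : ℤ) then 2 else 0)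

/-- The list of indices of `w_{r,j} = s_{j-1} ⋯ s_{r-1} · s_{j+1} ⋯ s_{n-1} ·
s_n s_{n-1} ⋯ s_r` (rightmost factor applied first, so applied via `foldr`). -/
def wrjIdx (n : ℕ) (r j : ℤ) : List ℤ :=
  ((List.range (j + 1 - r).toNat).map fun t => j - 1 - (t : ℤ))
    ++ ((List.range ((n : ℤ) - 1 - j).toNat).map fun t => j + 1 + (t : ℤ))
    ++ ((List.range ((n : ℤ) + 1 - r).toNat).map fun t => (n : ℤ) - (t : ℤ))

/-!
Write vectors as `update f i c`: the entry `c` at position `i` over a background `f`.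
When `f i = f (i + 1)`, the transposition `s_i` (for `i < n`) just moves the entry `c`
between `i` and `i + 1`, and `s_n` negates an entry sitting at `n`. Starting from
`ω_r = update ω_{r-1} r 1`, the factors `s_r, …, s_{n-1}` carry the `1` to position `n`,
`s_n` turns it into `-1`, the factors `s_{n-1}, …, s_{j+1}` carry that `-1` back to `j + 1`,
and finally `s_{r-1}, …, s_{j-1}` carry the last `1` of `ω_{r-1}` from `r - 1` to `j`.
What remains is `ω_{r-2} + ε_j - ε_{j+1}`.
-/

open Function

section Shifts

variable {n : ℕ} {f : ℤ → ℝ} {c : ℝ} {a b : ℤ}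

theorem refC_update_of_le {i : ℤ} (hi : i ≤ (n : ℤ) - 1) (hf : f i = f (i + 1)) :
    refC n i (update f i c) = update f (i + 1) c := by
  funext t
  simp only [refC, hi, if_true, update_apply]
  split_ifs <;> first | rfl | (exfalso; omega) | simp_all

theorem refC_update_succ_of_le {i : ℤ} (hi : i ≤ (n : ℤ) - 1) (hf : f i = f (i + 1)) :
    refC n i (update f (i + 1) c) = update f i c := by
  funext t
  simp only [refC, hi, if_true, update_apply]
  split_ifs <;> first | rfl | (exfalso; omega) | simp_all

theorem refC_self_update : refC n n (update f n c) = update f n (-c) := by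
  funext t
  simp only [refC, show ¬ (n : ℤ) ≤ n - 1 by omega, if_false, update_apply]
  split_ifs <;> simp_all

theorem foldr_refC_update_shift_up (hf : ∀ t, a ≤ t → t < b → f t = f (t + 1))
    (hb : b ≤ n) (k : ℕ) (hk : a + k = b) :
    ((List.range k).map fun t : ℕ => b - 1 - t).foldr (refC n) (update f a c)
      = update f b c := by
  induction k generalizing a with
  | zero => simp_all
  | succ k ih =>
    rw [List.range_succ, List.map_append, List.foldr_append]
    simp only [List.map_cons, List.map_nil, List.foldr_cons, List.foldr_nil]
    rw [show b - 1 - (k : ℤ) = a by omega, refC_update_of_le (by omega) (hf a le_rfl (by omega))]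
    exact ih (fun t ht htb => hf t (by omega) htb) (by omega)

theorem foldr_refC_update_shift_down (hf : ∀ t, a ≤ t → t < b → f t = f (t + 1))
    (hb : b ≤ n) (k : ℕ) (hk : a + k = b) :
    ((List.range k).map fun t : ℕ => a + t).foldr (refC n) (update f b c)
      = update f a c := by
  induction k generalizing b with
  | zero => simp_all
  | succ k ih =>
    rw [List.range_succ, List.map_append, List.foldr_append]
    simp only [List.map_cons, List.map_nil, List.foldr_cons, List.foldr_nil]
    rw [show b = a + k + 1 by omega,
      refC_update_succ_of_le (by omega) (hf (a + k) (by omega) (by omega))]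
    exact ih (fun t ht htb => hf t ht (by omega)) (by omega) rfl

end Shifts

theorem omegaW_eq_succ_of_lt {r t : ℤ} (h : r < t) : omegaW r t = omegaW r (t + 1) := by
  simp only [omegaW, if_neg (show ¬(1 ≤ t ∧ t ≤ r) by omega),
    if_neg (show ¬(1 ≤ t + 1 ∧ t + 1 ≤ r) by omega)]

theorem omegaW_eq_update {r : ℤ} (hr : 1 ≤ r) : omegaW r = update (omegaW (r - 1)) r 1 := by
  funext t
  simp only [omegaW, update_apply]
  split_ifs <;> first | rfl | omega

theorem List.map_range_succ_sub (b : ℤ) (k : ℕ) :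
    (List.range (k + 1)).map (fun t : ℕ => b - t)
      = b :: (List.range k).map fun t : ℕ => b - 1 - t := by
  rw [List.range_succ_eq_map, List.map_cons, List.map_map]
  congr 1
  · simp
  · refine List.map_congr_left fun t _ => ?_
    simp only [comp_apply, Nat.cast_succ]
    ring

-- In `wrjIdx` the binders are elaborated at type `ℤ`, so each `List.range` is coerced to
-- `List ℤ` through the list monad; this restates it with `ℕ`-indexed maps.
theorem wrjIdx_eq (n : ℕ) (r j : ℤ) :
    wrjIdx n r j
      = ((List.range (j + 1 - r).toNat).map fun t : ℕ => j - 1 - t)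
        ++ ((List.range ((n : ℤ) - 1 - j).toNat).map fun t : ℕ => j + 1 + t)
        ++ ((List.range ((n : ℤ) + 1 - r).toNat).map fun t : ℕ => (n : ℤ) - t) := by
  simp [wrjIdx, ← List.map_eq_flatMap, Function.comp_def]

theorem wrj_omega_C_general (n : ℕ) (r j : ℤ) (hr : 2 ≤ r) (hrn : r ≤ (n : ℤ))
    (hj1 : r - 1 ≤ j) (hj2 : j ≤ (n : ℤ) - 1) :
    (wrjIdx n r j).foldr (refC n) (omegaW r) = omegaW (r - 2) + alphaC n j := by
  set g := update (omegaW (r - 2)) (j + 1) (-1)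
  have hg : ∀ t, r - 1 ≤ t → t < j → g t = g (t + 1) := fun t ht htj => by
    simp only [g, update_of_ne (show t ≠ j + 1 by omega),
      update_of_ne (show t + 1 ≠ j + 1 by omega)]
    exact omegaW_eq_succ_of_lt (by omega)
  have hω : update (omegaW (r - 1)) (j + 1) (-1) = update g (r - 1) 1 := by
    rw [omegaW_eq_update (by omega : 1 ≤ r - 1), update_comm (by omega),
      show r - 1 - 1 = r - 2 by ring]
  have hC : ((n : ℤ) + 1 - r).toNat = ((n : ℤ) - r).toNat + 1 := by omega
  rw [wrjIdx_eq, List.foldr_append, List.foldr_append, hC, List.map_range_succ_sub,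
    List.foldr_cons, omegaW_eq_update (by omega),
    foldr_refC_update_shift_up (fun t ht _ => omegaW_eq_succ_of_lt (by omega)) le_rfl _ (by omega),
    refC_self_update,
    foldr_refC_update_shift_down (fun t ht _ => omegaW_eq_succ_of_lt (by omega)) le_rfl _
      (by omega),
    hω, foldr_refC_update_shift_up hg (by omega) _ (by omega)]
  funext t
  simp only [g, omegaW, alphaC, hj2, if_true, Pi.add_apply, update_apply]
  split_ifs <;> first | rfl | (exfalso; omega) | norm_num

/-- type C_n: for `2 ≤ r ≤ n` and `r - 1 ≤ j ≤ n - 1`,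
`w_{r,j}(ω_r) = ω_{r-2} + α_j`. -/
theorem wrj_omega_C (n : ℕ) (hn : 2 ≤ n) (r j : ℤ) (hr : 2 ≤ r) (hrn : r ≤ (n : ℤ))
    (hj1 : r - 1 ≤ j) (hj2 : j ≤ (n : ℤ) - 1) :
    (wrjIdx n r j).foldr (refC n) (omegaW r) = omegaW (r - 2) + alphaC n j :=
  wrj_omega_C_general n r j hr hrn hj1 hj2
end

section
/- (Type C_n, braid group action formula.) Let 2 ≤ r ≤ n, r−1 ≤ j ≤ n−1 and a ∈ ℂ*. Then for r ≤ l ≤ j: T_{r,j}(ω_{l,a}) = ω_{l−2, aq^2} · ω_{j−1, aq^{j−l+3}}^{−1} · ω_{j, aq^{j−l+2}} · ω_{j, aq^{2n−j−l+2}} · ω_{j+1, aq^{2n−j−l+3}}^{−1}, and for j < l ≤ n: T_{r,j}(ω_{l,a}) = ω_{l, aq^2} · ω_{j, aq^{l−j}} · ω_{j, aq^{2n−j−l+2}} · ω_{j+1, aq^{l−j+1}}^{−1} · ω_{j+1, aq^{2n−j−l+3}}^{−1}. -/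
noncomputable section

/-- Image of the basis element `x = (j, a)` under the braid group operator `T i`
(determined by the Cartan matrix `A` and the integers `d`, with `q_i = q^{d i}`):
`T_i(ω_{j,a}) = ω_{j,a}` for `j ≠ i`, and
`T_i(ω_{i,a}) = ω_{i, a q_i²}^{-1} ∏_{j : A j i = -1} ω_{j, a q_i}
∏_{j : A j i = -2} ω_{j, aq} ω_{j, aq³}` (additive notation). -/
def Timg (n : ℕ) (q : ℂ) (d : ℤ → ℕ) (A : ℤ → ℤ → ℤ) (i : ℤ) (x : ℤ × ℂ) : Pq :=
  if x.1 = i then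
    -Finsupp.single (i, x.2 * (q ^ d i) ^ 2) 1
      + ∑ j ∈ Finset.Icc (1 : ℤ) (n : ℤ),
          (if A j i = -1 then Finsupp.single (j, x.2 * q ^ d i) (1 : ℤ) else 0)
      + ∑ j ∈ Finset.Icc (1 : ℤ) (n : ℤ),
          (if A j i = -2 then
            Finsupp.single (j, x.2 * q) (1 : ℤ) + Finsupp.single (j, x.2 * q ^ 3) 1
           else 0)
  else Finsupp.single x 1

/-- The operator `T i : P_q → P_q`, the unique group endomorphism extending the
action on the generators. -/
def Tq (n : ℕ) (q : ℂ) (d : ℤ → ℕ) (A : ℤ → ℤ → ℤ) (i : ℤ) (f : Pq) : Pq :=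
  f.sum fun x c => c • Timg n q d A i x

/-- The composite of the operators `T i` over a list of indices, the rightmost
index being applied first. -/
def Tlist (n : ℕ) (q : ℂ) (d : ℤ → ℕ) (A : ℤ → ℤ → ℤ) (L : List ℤ) (f : Pq) : Pq :=
  L.foldr (Tq n q d A) f

/-- `α_{j,c} = (T_j(ω_{j,c}))^{-1} · ω_{j,c}` (additive notation). -/
def alphaEl (n : ℕ) (q : ℂ) (d : ℤ → ℕ) (A : ℤ → ℤ → ℤ) (j : ℤ) (c : ℂ) : Pq :=
  lomega n j c - Tq n q d A j (lomega n j c)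

/-- The integers `d_i` for type `C_n`: `d_i = 1` for `i < n`, `d_n = 2`. -/
def dC (n : ℕ) (i : ℤ) : ℕ := if i = (n : ℤ) then 2 else 1

/-- The Cartan matrix of type `C_n` (Bourbaki labeling), on indices `1, …, n`:
`a_{j,j+1} = a_{j+1,j} = -1` for `j ≤ n-2`, `a_{n-1,n} = -2`, `a_{n,n-1} = -1`. -/
def AC (n : ℕ) (j k : ℤ) : ℤ :=
  if j = k then 2
  else if k = j + 1 then (if j = (n : ℤ) - 1 then -2 else -1)
  else if j = k + 1 then -1
  else 0

/-- The list of indices of `T_{r,j} = T_{j-1} ⋯ T_{r-1} · T_{j+1} ⋯ T_{n-1} ·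
T_n T_{n-1} ⋯ T_r` (rightmost factor applied first, via `foldr`). -/
def TrjIdx (n : ℕ) (r j : ℤ) : List ℤ :=
  ((List.range (j + 1 - r).toNat).map fun t => j - 1 - (t : ℤ))
    ++ ((List.range ((n : ℤ) - 1 - j).toNat).map fun t => j + 1 + (t : ℤ))
    ++ ((List.range ((n : ℤ) + 1 - r).toNat).map fun t => (n : ℤ) - (t : ℤ))

namespace Aux

def TqHom (n : ℕ) (q : ℂ) (d : ℤ → ℕ) (A : ℤ → ℤ → ℤ) (i : ℤ) : Pq →+ Pq :=
  Finsupp.liftAddHom (fun x => AddMonoidHom.flip (smulAddHom ℤ Pq) (Timg n q d A i x))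

lemma Tq_eq (n q d A i f) : Tq n q d A i f = TqHom n q d A i f := rfl

lemma Tq_add (n q d A i f g) :
    Tq n q d A i (f + g) = Tq n q d A i f + Tq n q d A i g := by
  simp [Tq_eq]

lemma Tq_sub (n q d A i f g) :
    Tq n q d A i (f - g) = Tq n q d A i f - Tq n q d A i g := by
  simp [Tq_eq]

lemma Tq_neg (n q d A i f) : Tq n q d A i (-f) = -Tq n q d A i f := by
  simp [Tq_eq]

lemma Tq_zero (n q d A i) : Tq n q d A i 0 = 0 := by simp [Tq_eq]

lemma Tq_single (n q d A i x) :
    Tq n q d A i (Finsupp.single x 1) = Timg n q d A i x := by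
  unfold Tq
  rw [Finsupp.sum_single_index] <;> simp

lemma Tq_lomega_ne (n q d A) {i jj : ℤ} (h : jj ≠ i) (a : ℂ) :
    Tq n q d A i (lomega n jj a) = lomega n jj a := by
  unfold lomega
  split
  · rw [Tq_single, Timg]
    simp [h]
  · exact Tq_zero n q d A i

end Aux

namespace Aux2
open Aux

lemma ite_mem_Icc (n : ℕ) (b : ℤ) (v : ℂ) :
    (if b ∈ Finset.Icc (1:ℤ) (n:ℤ) then (Finsupp.single (b,v) 1 : Pq) else 0) = lomega n b v := by
  simp [lomega, Finset.mem_Icc]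

lemma Tq_lomega_lt (n : ℕ) (q : ℂ) {i : ℤ} (hi1 : 1 ≤ i) (hi2 : i ≤ (n:ℤ) - 1) (c : ℂ) :
    Tq n q (dC n) (AC n) i (lomega n i c) =
      -lomega n i (c * q ^ 2) + lomega n (i-1) (c * q) + lomega n (i+1) (c * q) := by
  have hb : 1 ≤ i ∧ i ≤ (n:ℤ) := ⟨hi1, by omega⟩
  rw [lomega, if_pos hb, Tq_single, Timg]
  simp only [if_pos rfl]
  have hd : dC n i = 1 := if_neg (by omega)
  rw [hd, pow_one]
  have key : ∀ x ∈ Finset.Icc (1:ℤ) (n:ℤ),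
      (if AC n x i = -1 then (Finsupp.single (x, c*q) 1 : Pq) else 0) =
      (if x = i-1 then (Finsupp.single (i-1, c*q) 1 : Pq) else 0)
        + (if x = i+1 then (Finsupp.single (i+1, c*q) 1 : Pq) else 0) := by
    intro x _
    rcases eq_or_ne x (i-1) with rfl | h1
    · have hA : AC n (i-1) i = -1 := by unfold AC; split_ifs <;> omega
      simp [hA, show i - 1 ≠ i + 1 by omega]
    rcases eq_or_ne x (i+1) with rfl | h2
    · have hA : AC n (i+1) i = -1 := by unfold AC; split_ifs <;> omega
      simp [hA, h1]
    · have hA : AC n x i ≠ -1 := by unfold AC; split_ifs <;> omega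
      simp [hA, h1, h2]
  have key2 : ∀ x ∈ Finset.Icc (1:ℤ) (n:ℤ),
      (if AC n x i = -2 then
        (Finsupp.single (x, c*q) 1 : Pq) + Finsupp.single (x, c*q^3) 1 else 0) = 0 := by
    intro x _
    have hA : AC n x i ≠ -2 := by unfold AC; split_ifs <;> omega
    simp [hA]
  rw [Finset.sum_congr rfl key, Finset.sum_add_distrib,
    Finset.sum_ite_eq' (Finset.Icc (1:ℤ) (n:ℤ)) (i-1),
    Finset.sum_ite_eq' (Finset.Icc (1:ℤ) (n:ℤ)) (i+1),
    Finset.sum_congr rfl key2, Finset.sum_const_zero,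
    ite_mem_Icc, ite_mem_Icc]
  simp only [if_true, add_zero]
  simp only [lomega, hb.1, hb.2, and_self, if_true]
  abel

lemma Tq_lomega_top (n : ℕ) (q : ℂ) (hn : 2 ≤ n) (c : ℂ) :
    Tq n q (dC n) (AC n) (n:ℤ) (lomega n (n:ℤ) c) =
      -lomega n (n:ℤ) (c * q ^ 4) + lomega n ((n:ℤ)-1) (c * q) + lomega n ((n:ℤ)-1) (c * q ^ 3) := by
  have hb : 1 ≤ (n:ℤ) ∧ (n:ℤ) ≤ (n:ℤ) := ⟨by omega, le_refl _⟩
  rw [lomega, if_pos hb, Tq_single, Timg]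
  simp only [if_pos rfl]
  have hd : dC n (n:ℤ) = 2 := if_pos rfl
  rw [hd]
  have key : ∀ x ∈ Finset.Icc (1:ℤ) (n:ℤ),
      (if AC n x (n:ℤ) = -1 then (Finsupp.single (x, c*q^2) 1 : Pq) else 0) = 0 := by
    intro x hx
    rw [Finset.mem_Icc] at hx
    have hA : AC n x (n:ℤ) ≠ -1 := by unfold AC; split_ifs <;> omega
    simp [hA]
  have key2 : ∀ x ∈ Finset.Icc (1:ℤ) (n:ℤ),
      (if AC n x (n:ℤ) = -2 then
        (Finsupp.single (x, c*q) 1 : Pq) + Finsupp.single (x, c*q^3) 1 else 0) =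
      (if x = (n:ℤ)-1 then
        (Finsupp.single ((n:ℤ)-1, c*q) 1 : Pq) + Finsupp.single ((n:ℤ)-1, c*q^3) 1 else 0) := by
    intro x _
    rcases eq_or_ne x ((n:ℤ)-1) with rfl | h1
    · have hA : AC n ((n:ℤ)-1) (n:ℤ) = -2 := by unfold AC; split_ifs <;> omega
      simp [hA]
    · have hA : AC n x (n:ℤ) ≠ -2 := by unfold AC; split_ifs <;> omega
      simp [hA, h1]
  rw [Finset.sum_congr rfl key, Finset.sum_congr rfl key2,
    Finset.sum_ite_eq' (Finset.Icc (1:ℤ) (n:ℤ)) ((n:ℤ)-1), Finset.sum_const_zero]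
  have hmem : ((n:ℤ)-1) ∈ Finset.Icc (1:ℤ) (n:ℤ) := by rw [Finset.mem_Icc]; omega
  rw [if_pos hmem, lomega, if_pos hb, lomega,
    if_pos (show 1 ≤ (n:ℤ)-1 ∧ (n:ℤ)-1 ≤ (n:ℤ) by omega), lomega,
    if_pos (show 1 ≤ (n:ℤ)-1 ∧ (n:ℤ)-1 ≤ (n:ℤ) by omega)]
  have hq4 : c * (q ^ 2) ^ 2 = c * q ^ 4 := by ring
  rw [hq4]
  simp only [eq_self_iff_true, if_true, zero_add]
  abel

end Aux2

namespace Aux3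
open Aux Aux2

lemma stepUp (n : ℕ) (q : ℂ) {s : ℤ} (h1 : 1 ≤ s) (h2 : s ≤ (n:ℤ)-1) (c : ℂ) :
    Tq n q (dC n) (AC n) s (lomega n s c - lomega n (s-1) (c*q)) =
      lomega n (s+1) (c*q) - lomega n s (c*q^2) := by
  rw [Tq_sub, Tq_lomega_lt n q h1 h2, Tq_lomega_ne n q _ _ (show s-1 ≠ s by omega)]
  abel

lemma stepDown (n : ℕ) (q : ℂ) {s : ℤ} (h1 : 1 ≤ s) (h2 : s ≤ (n:ℤ)-1) (c : ℂ) :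
    Tq n q (dC n) (AC n) s (lomega n s c - lomega n (s+1) (c*q)) =
      lomega n (s-1) (c*q) - lomega n s (c*q^2) := by
  rw [Tq_sub, Tq_lomega_lt n q h1 h2, Tq_lomega_ne n q _ _ (show s+1 ≠ s by omega)]
  abel

lemma mq1 {q : ℂ} (hq : q ≠ 0) (a : ℂ) (e : ℤ) : a * q^e * q = a * q^(e+1) := by
  rw [zpow_add_one₀ hq, mul_assoc]

lemma mqn {q : ℂ} (hq : q ≠ 0) (a : ℂ) (e : ℤ) (m : ℕ) :
    a * q^e * q^m = a * q^(e + m) := by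
  rw [mul_assoc, ← zpow_natCast q m, ← zpow_add₀ hq]

lemma mqb {q : ℂ} (hq : q ≠ 0) (a : ℂ) (m : ℕ) :
    a * q * q^m = a * q^((1:ℤ) + m) := by
  rw [mul_assoc, ← zpow_natCast q m, ← zpow_one_add₀ hq]

lemma mqc {q : ℂ} (hq : q ≠ 0) (a : ℂ) : a * q * q = a * q^((2:ℤ)) := by
  rw [mul_assoc, ← pow_two, ← zpow_natCast q 2]
  norm_num

lemma Tlist_append (n q d A L1 L2 f) :
    Tlist n q d A (L1 ++ L2) f = Tlist n q d A L1 (Tlist n q d A L2 f) := by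
  simp [Tlist]

lemma Tlist_singleton (n q d A i f) : Tlist n q d A [i] f = Tq n q d A i f := rfl

lemma stageUp (n : ℕ) (q : ℂ) (Z : ℤ → Pq) (b : ℤ) (K : ℤ)
    (htrans : ∀ s : ℤ, b + 1 - K ≤ s → s ≤ b →
      Tq n q (dC n) (AC n) s (Z s) = Z (s+1)) :
    ∀ k : ℕ, (k : ℤ) ≤ K →
      Tlist n q (dC n) (AC n) ((List.range k).map fun t => b - (t:ℤ)) (Z (b - k + 1))
        = Z (b+1) := by
  intro k
  induction k with
  | zero => intro _; simp [Tlist]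
  | succ k ih =>
    intro hk
    have hsplit : ((List.range (k+1)).map fun t => b - (t:ℤ))
        = ((List.range k).map fun t => b - (t:ℤ)) ++ [b - (k:ℤ)] := by
      simp [List.range_succ]
    rw [hsplit, Tlist_append, Tlist_singleton]
    have e1 : (b - ((k+1:ℕ):ℤ) + 1) = b - (k:ℤ) := by push_cast; ring
    rw [e1, htrans (b - k) (by push_cast at hk ⊢; omega) (by omega)]
    have e2 : (b - (k:ℤ)) + 1 = b - (k:ℤ) + 1 := rfl
    exact ih (by push_cast at hk ⊢; omega)

lemma stageDown (n : ℕ) (q : ℂ) (Z : ℤ → Pq) (b : ℤ) (K : ℤ)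
    (htrans : ∀ s : ℤ, b ≤ s → s ≤ b - 1 + K →
      Tq n q (dC n) (AC n) s (Z s) = Z (s-1)) :
    ∀ k : ℕ, (k : ℤ) ≤ K →
      Tlist n q (dC n) (AC n) ((List.range k).map fun t => b + (t:ℤ)) (Z (b + k - 1))
        = Z (b-1) := by
  intro k
  induction k with
  | zero => intro _; simp [Tlist]
  | succ k ih =>
    intro hk
    have hsplit : ((List.range (k+1)).map fun t => b + (t:ℤ))
        = ((List.range k).map fun t => b + (t:ℤ)) ++ [b + (k:ℤ)] := by
      simp [List.range_succ]
    rw [hsplit, Tlist_append, Tlist_singleton]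
    have e1 : (b + ((k+1:ℕ):ℤ) - 1) = b + (k:ℤ) := by push_cast; ring
    rw [e1, htrans (b + k) (by omega) (by push_cast at hk ⊢; omega)]
    have e2 : b + (k:ℤ) - 1 = b + (k:ℤ) - 1 := rfl
    exact ih (by push_cast at hk ⊢; omega)

end Aux3

namespace Aux4
open Aux Aux2 Aux3

lemma zpow_num (q : ℂ) (m : ℕ) [Nat.AtLeastTwo m] :
    q ^ (OfNat.ofNat m : ℤ) = q ^ (OfNat.ofNat m : ℕ) := by
  rw [show (OfNat.ofNat m : ℤ) = ((OfNat.ofNat m : ℕ) : ℤ) by simp, zpow_natCast]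


def ZA (n : ℕ) (q a : ℂ) (l s : ℤ) : Pq :=
  if (n:ℤ) + 1 ≤ s then
    lomega n (l-1) (a*q) + lomega n ((n:ℤ)-1) (a*q^((n:ℤ)-l+3))
      - lomega n (n:ℤ) (a*q^((n:ℤ)-l+4))
  else if s ≤ l then lomega n l a
  else lomega n (l-1) (a*q) - lomega n (s-1) (a*q^(s-l+1)) + lomega n s (a*q^(s-l))

lemma phaseA (n : ℕ) (q : ℂ) (hq : q ≠ 0) (a : ℂ) (l r : ℤ) (hn : 2 ≤ n)
    (hr : 2 ≤ r) (hrl : r ≤ l) (hln : l ≤ (n:ℤ)) :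
    Tlist n q (dC n) (AC n)
        ((List.range (((n:ℤ)+1-r).toNat)).map fun t => (n:ℤ) - (t:ℤ)) (lomega n l a)
      = lomega n (l-1) (a*q) + lomega n ((n:ℤ)-1) (a*q^((n:ℤ)-l+3))
          - lomega n (n:ℤ) (a*q^((n:ℤ)-l+4)) := by
  have htrans : ∀ s : ℤ, (n:ℤ) + 1 - ((n:ℤ)+1-r) ≤ s → s ≤ (n:ℤ) →
      Tq n q (dC n) (AC n) s (ZA n q a l s) = ZA n q a l (s+1) := by
    intro s hs1 hs2
    have hs1' : r ≤ s := by omega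
    by_cases hc1 : s ≤ l - 1
    · rw [show ZA n q a l s = lomega n l a by
        rw [ZA, if_neg (by omega), if_pos (by omega)],
        show ZA n q a l (s+1) = lomega n l a by
        rw [ZA, if_neg (by omega), if_pos (by omega)],
        Tq_lomega_ne n q _ _ (show l ≠ s by omega)]
    by_cases hc2 : s = l
    · rw [hc2]
      rw [show ZA n q a l l = lomega n l a by
        rw [ZA, if_neg (by omega), if_pos le_rfl]]
      by_cases hc3 : l = (n:ℤ)
      · rw [hc3, Tq_lomega_top n q hn a, ZA, if_pos (by omega)]
        try simp only [← zpow_natCast q]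
        try push_cast
        ring_nf
        try simp only [zpow_one]
        abel
      · rw [Tq_lomega_lt n q (by omega) (by omega),
          ZA, if_neg (by omega), if_neg (by omega)]
        try simp only [← zpow_natCast q]
        try push_cast
        ring_nf
        try simp only [zpow_one]
        abel
    · -- l < s
      rw [show ZA n q a l s = lomega n (l-1) (a*q)
            - lomega n (s-1) (a*q^(s-l+1)) + lomega n s (a*q^(s-l)) by
          rw [ZA, if_neg (by omega), if_neg (by omega)],
        Tq_add, Tq_sub,
        Tq_lomega_ne n q _ _ (show l-1 ≠ s by omega),
        Tq_lomega_ne n q _ _ (show s-1 ≠ s by omega)]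
      by_cases hc3 : s = (n:ℤ)
      · subst hc3
        rw [Tq_lomega_top n q hn, ZA, if_pos (by omega),
          mq1 hq, mqn hq, mqn hq]
        try simp only [← zpow_natCast q]
        try push_cast
        ring_nf
        try simp only [zpow_one]
        abel
      · rw [Tq_lomega_lt n q (by omega) (by omega),
          ZA, if_neg (by omega), if_neg (by omega),
          mq1 hq, mqn hq]
        try simp only [← zpow_natCast q]
        try push_cast
        ring_nf
        try simp only [zpow_one]
        abel
  have hK : ((((n:ℤ)+1-r).toNat : ℤ)) = (n:ℤ)+1-r := Int.toNat_of_nonneg (by omega)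
  have := stageUp n q (ZA n q a l) (n:ℤ) ((n:ℤ)+1-r) htrans (((n:ℤ)+1-r).toNat)
    (by omega)
  rw [hK, show (n:ℤ) - ((n:ℤ)+1-r) + 1 = r by ring] at this
  rw [show ZA n q a l r = lomega n l a by
      rw [ZA, if_neg (by omega), if_pos (by omega)]] at this
  rw [this, ZA, if_pos (by omega)]

end Aux4

namespace Aux5
open Aux Aux2 Aux3 Aux4

lemma map_range_add (b : ℤ) (k1 k2 : ℕ) :
    ((List.range (k1+k2)).map fun t => b + (t:ℤ)) =
      ((List.range k1).map fun t => b + (t:ℤ))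
        ++ ((List.range k2).map fun t => (b+(k1:ℤ)) + (t:ℤ)) := by
  simp [List.range_add, Function.comp]
  simp only [← List.map_eq_flatMap, List.map_map]
  apply List.map_congr_left
  intro t _
  simp only [Function.comp_apply]
  push_cast
  ring

def YB (n : ℕ) (q a : ℂ) (l s : ℤ) : Pq :=
  lomega n (l-1) (a*q) + lomega n s (a*q^(2*(n:ℤ)-s-l+2))
    - lomega n (s+1) (a*q^(2*(n:ℤ)-s-l+3))

lemma transYB (n : ℕ) (q : ℂ) (hq : q ≠ 0) (a : ℂ) (l s : ℤ) (h2l : 2 ≤ l)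
    (hls : l ≤ s) (hsn : s ≤ (n:ℤ)-1) :
    Tq n q (dC n) (AC n) s (YB n q a l s) = YB n q a l (s-1) := by
  rw [YB, YB, Tq_sub, Tq_add,
    Tq_lomega_ne n q _ _ (show l-1 ≠ s by omega),
    Tq_lomega_ne n q _ _ (show s+1 ≠ s by omega),
    Tq_lomega_lt n q (by omega) hsn,
    mq1 hq, mqn hq]
  try simp only [← zpow_natCast q]
  try push_cast
  ring_nf
  try simp only [zpow_one]
  abel

def YB2 (n : ℕ) (q a : ℂ) (l j s : ℤ) : Pq :=
  lomega n l (a*q^(2:ℤ)) + lomega n s (a*q^(l-s)) - lomega n (s+1) (a*q^(l-s+1))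
    + lomega n s (a*q^(2*(n:ℤ)-s-l+2)) - lomega n (s+1) (a*q^(2*(n:ℤ)-s-l+3))

lemma bridgeYB (n : ℕ) (q : ℂ) (hq : q ≠ 0) (a : ℂ) (l j : ℤ) :
    YB2 n q a l j (l-1) = YB n q a l (l-1) := by
  rw [YB2, YB]
  try simp only [← zpow_natCast q]
  try push_cast
  ring_nf
  try simp only [zpow_one]
  abel

lemma transYB2 (n : ℕ) (q : ℂ) (hq : q ≠ 0) (a : ℂ) (l j s : ℤ) (h2s : 2 ≤ s)
    (hsl : s ≤ l - 1) (hsn : s ≤ (n:ℤ)-1) :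
    Tq n q (dC n) (AC n) s (YB2 n q a l j s) = YB2 n q a l j (s-1) := by
  rw [YB2, YB2]
  simp only [Tq_sub, Tq_add,
    Tq_lomega_ne n q _ _ (show l ≠ s by omega),
    Tq_lomega_ne n q _ _ (show s+1 ≠ s by omega),
    Tq_lomega_lt n q (show (1:ℤ) ≤ s by omega) hsn,
    mq1 hq, mqn hq]
  try simp only [← zpow_natCast q]
  try push_cast
  ring_nf
  try simp only [zpow_one]
  abel

end Aux5

namespace Aux6
open Aux Aux2 Aux3 Aux4 Aux5

def ZC (n : ℕ) (q a : ℂ) (l j s : ℤ) : Pq :=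
  lomega n j (a*q^(2*(n:ℤ)-j-l+2)) - lomega n (j+1) (a*q^(2*(n:ℤ)-j-l+3)) +
    (if s ≤ l - 1 then lomega n (l-1) (a*q)
     else lomega n (l-2) (a*q^(2:ℤ)) + lomega n s (a*q^(s-l+2))
            - lomega n (s-1) (a*q^(s-l+3)))

lemma transZC (n : ℕ) (q : ℂ) (hq : q ≠ 0) (a : ℂ) (l j s : ℤ)
    (h2l : 2 ≤ l) (h1s : 1 ≤ s) (hsl : l ≤ j) (hsj : s ≤ j - 1)
    (hjn : j ≤ (n:ℤ)-1) :
    Tq n q (dC n) (AC n) s (ZC n q a l j s) = ZC n q a l j (s+1) := by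
  by_cases hc1 : s ≤ l - 2
  · rw [ZC, ZC, if_pos (by omega), if_pos (by omega)]
    simp only [Tq_sub, Tq_add,
      Tq_lomega_ne n q _ _ (show j ≠ s by omega),
      Tq_lomega_ne n q _ _ (show j+1 ≠ s by omega),
      Tq_lomega_ne n q _ _ (show l-1 ≠ s by omega)]
  by_cases hc2 : s = l - 1
  · rw [ZC, ZC, if_pos (by omega), if_neg (by omega), hc2]
    simp only [Tq_sub, Tq_add,
      Tq_lomega_ne n q _ _ (show j ≠ l-1 by omega),
      Tq_lomega_ne n q _ _ (show j+1 ≠ l-1 by omega),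
      Tq_lomega_lt n q (show (1:ℤ) ≤ l-1 by omega) (show l-1 ≤ (n:ℤ)-1 by omega),
      mqb hq, mqc hq]
    try simp only [← zpow_natCast q]
    try push_cast
    ring_nf
    try simp only [zpow_one]
    abel
  · rw [ZC, ZC, if_neg (by omega), if_neg (by omega)]
    simp only [Tq_sub, Tq_add,
      Tq_lomega_ne n q _ _ (show j ≠ s by omega),
      Tq_lomega_ne n q _ _ (show j+1 ≠ s by omega),
      Tq_lomega_ne n q _ _ (show l-2 ≠ s by omega),
      Tq_lomega_ne n q _ _ (show s-1 ≠ s by omega),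
      Tq_lomega_lt n q h1s (show s ≤ (n:ℤ)-1 by omega),
      mq1 hq, mqn hq]
    try simp only [← zpow_natCast q]
    try push_cast
    ring_nf
    try simp only [zpow_one]
    abel

lemma transConst (n : ℕ) (q : ℂ) (a : ℂ) (l j s : ℤ)
    (h1s : 1 ≤ s) (hsj : s ≤ j - 1) (hjl : j < l) :
    Tq n q (dC n) (AC n) s (YB2 n q a l j j) = YB2 n q a l j j := by
  rw [YB2]
  simp only [Tq_sub, Tq_add,
    Tq_lomega_ne n q _ _ (show l ≠ s by omega),
    Tq_lomega_ne n q _ _ (show j ≠ s by omega),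
    Tq_lomega_ne n q _ _ (show j+1 ≠ s by omega)]

end Aux6

open Aux Aux2 Aux3 Aux4 Aux5 Aux6 in
/-- type C_n: for `2 ≤ r ≤ n`, `r-1 ≤ j ≤ n-1`, `a ∈ ℂ*`, the
braid group operator `T_{r,j}` acts on `ω_{l,a}` by the stated closed formulas
for `r ≤ l ≤ j` and for `j < l ≤ n`. -/
theorem Trj_omega_C (n : ℕ) (q : ℂ) (hn : 2 ≤ n) (hq : q ≠ 0)
    (hroot : ∀ k : ℕ, k ≠ 0 → q ^ k ≠ 1) (r j : ℤ) (hr : 2 ≤ r)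
    (hrn : r ≤ (n : ℤ)) (hj1 : r - 1 ≤ j) (hj2 : j ≤ (n : ℤ) - 1)
    (a : ℂ) (ha : a ≠ 0) (l : ℤ) :
    (r ≤ l → l ≤ j →
      Tlist n q (dC n) (AC n) (TrjIdx n r j) (lomega n l a) =
        lomega n (l - 2) (a * q ^ (2 : ℤ))
          - lomega n (j - 1) (a * q ^ (j - l + 3))
          + lomega n j (a * q ^ (j - l + 2))
          + lomega n j (a * q ^ (2 * (n : ℤ) - j - l + 2))
          - lomega n (j + 1) (a * q ^ (2 * (n : ℤ) - j - l + 3))) ∧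
    (j < l → l ≤ (n : ℤ) →
      Tlist n q (dC n) (AC n) (TrjIdx n r j) (lomega n l a) =
        lomega n l (a * q ^ (2 : ℤ))
          + lomega n j (a * q ^ (l - j))
          + lomega n j (a * q ^ (2 * (n : ℤ) - j - l + 2))
          - lomega n (j + 1) (a * q ^ (l - j + 1))
          - lomega n (j + 1) (a * q ^ (2 * (n : ℤ) - j - l + 3))) := by
  have hWA : ∀ l : ℤ, lomega n (l-1) (a*q) + lomega n ((n:ℤ)-1) (a*q^((n:ℤ)-l+3))
      - lomega n (n:ℤ) (a*q^((n:ℤ)-l+4)) = YB n q a l ((n:ℤ)-1) := by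
    intro l
    rw [YB]
    ring_nf
    try abel
  constructor
  · -- case r ≤ l ≤ j
    intro hrl hlj
    rw [TrjIdx, Tlist_append, Tlist_append,
      phaseA n q hq a l r hn hr hrl (by omega), hWA]
    -- phase B
    have htransB : ∀ s : ℤ, j+1 ≤ s → s ≤ j+1-1+((n:ℤ)-1-j) →
        Tq n q (dC n) (AC n) s (YB n q a l s) = YB n q a l (s-1) := by
      intro s h1 h2
      exact transYB n q hq a l s (by omega) (by omega) (by omega)
    have hB := stageDown n q (YB n q a l) (j+1) ((n:ℤ)-1-j) htransB
      (((n:ℤ)-1-j).toNat) (by omega)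
    rw [show (((((n:ℤ)-1-j).toNat)):ℤ) = (n:ℤ)-1-j from Int.toNat_of_nonneg (by omega)] at hB
    rw [show j+1+((n:ℤ)-1-j)-1 = (n:ℤ)-1 by ring, show j+1-1 = j by ring] at hB
    rw [hB]
    -- phase C
    have htransC : ∀ s : ℤ, j-1+1-(j+1-r) ≤ s → s ≤ j-1 →
        Tq n q (dC n) (AC n) s (ZC n q a l j s) = ZC n q a l j (s+1) := by
      intro s h1 h2
      exact transZC n q hq a l j s (by omega) (by omega) (by omega) (by omega) (by omega)
    have hC := stageUp n q (ZC n q a l j) (j-1) (j+1-r) htransC ((j+1-r).toNat)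
      (by omega)
    rw [show ((((j+1-r).toNat)):ℤ) = j+1-r from Int.toNat_of_nonneg (by omega)] at hC
    rw [show j-1-(j+1-r)+1 = r-1 by ring, show j-1+1 = j by ring] at hC
    have hstart : ZC n q a l j (r-1) = YB n q a l j := by
      rw [ZC, if_pos (by omega), YB]
      abel
    rw [hstart] at hC
    rw [hC, ZC, if_neg (by omega)]
    try simp only [← zpow_natCast q]
    try push_cast
    ring_nf
    try simp only [zpow_one]
    abel
  · -- case j < l ≤ n
    intro hjl hln
    rw [TrjIdx, Tlist_append, Tlist_append,
      phaseA n q hq a l r hn hr (by omega) hln]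
    have hsplit : ((List.range (((n:ℤ)-1-j).toNat)).map fun t => j+1+(t:ℤ))
        = ((List.range ((l-1-j).toNat)).map fun t => j+1+(t:ℤ))
          ++ ((List.range (((n:ℤ)-l).toNat)).map fun t => (j+1+(((l-1-j).toNat):ℤ)) + (t:ℤ)) := by
      rw [show ((n:ℤ)-1-j).toNat = (l-1-j).toNat + ((n:ℤ)-l).toNat by omega]
      exact map_range_add _ _ _
    rw [show ((((l-1-j).toNat)):ℤ) = l-1-j from Int.toNat_of_nonneg (by omega)] at hsplit
    rw [show j+1+(l-1-j) = l by ring] at hsplit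
    rw [hsplit, Tlist_append]
    -- upper stage
    have htransUp : ∀ s : ℤ, l ≤ s → s ≤ l-1+((n:ℤ)-l) →
        Tq n q (dC n) (AC n) s (YB n q a l s) = YB n q a l (s-1) := by
      intro s h1 h2
      exact transYB n q hq a l s (by omega) (by omega) (by omega)
    have hUp := stageDown n q (YB n q a l) l ((n:ℤ)-l) htransUp (((n:ℤ)-l).toNat)
      (by omega)
    rw [show (((((n:ℤ)-l).toNat)):ℤ) = (n:ℤ)-l from Int.toNat_of_nonneg (by omega)] at hUp
    rw [show l+((n:ℤ)-l)-1 = (n:ℤ)-1 by ring] at hUp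
    rw [hWA, hUp]
    -- lower stage
    have htransLow : ∀ s : ℤ, j+1 ≤ s → s ≤ j+1-1+(l-1-j) →
        Tq n q (dC n) (AC n) s (YB2 n q a l j s) = YB2 n q a l j (s-1) := by
      intro s h1 h2
      exact transYB2 n q hq a l j s (by omega) (by omega) (by omega)
    have hLow := stageDown n q (YB2 n q a l j) (j+1) (l-1-j) htransLow
      ((l-1-j).toNat) (by omega)
    rw [show ((((l-1-j).toNat)):ℤ) = l-1-j from Int.toNat_of_nonneg (by omega)] at hLow
    rw [show j+1+(l-1-j)-1 = l-1 by ring, show j+1-1 = j by ring,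
      bridgeYB n q hq a l j] at hLow
    rw [hLow]
    -- phase C (all fix)
    have htransC : ∀ s : ℤ, j-1+1-(j+1-r) ≤ s → s ≤ j-1 →
        Tq n q (dC n) (AC n) s ((fun _ : ℤ => YB2 n q a l j j) s)
          = (fun _ : ℤ => YB2 n q a l j j) (s+1) := by
      intro s h1 h2
      exact transConst n q a l j s (by omega) (by omega) (by omega)
    have hC := stageUp n q (fun _ : ℤ => YB2 n q a l j j) (j-1) (j+1-r) htransC
      ((j+1-r).toNat) (by omega)
    rw [hC, YB2]
    abel
end
end

section
/- (Type B_n.) The map 𝐣 ↦ π_r(𝐣)·π_r(𝐣,*) from J_r to P_q is injective. -/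
noncomputable section

/-- Type `B_n` (with `q_1 = q²`):
`π_r(j,s) = ω_{j, q_1^{i+j-2s-2r}}^{-1} · ω_{j, q_1^{2n-1-i-j+2s}}` (additively). -/
def piB1 (n i r : ℕ) (q : ℂ) (j s : ℤ) : Pq :=
  -lomega n j ((q ^ 2) ^ ((i : ℤ) + j - 2 * s - 2 * (r : ℤ))) +
    lomega n j ((q ^ 2) ^ (2 * (n : ℤ) - 1 - (i : ℤ) - j + 2 * s))

/-- Type `B_n`: `π_r(n, k - 1/4) = ω_{n, q^{2(i+n-2k-2r)+1}}^{-1} · ω_{n, q^{2(n-i+2k)-3}}`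
(additively). -/
def piBQ (n i r : ℕ) (q : ℂ) (k : ℤ) : Pq :=
  -lomega n (n : ℤ) (q ^ (2 * ((i : ℤ) + (n : ℤ) - 2 * k - 2 * (r : ℤ)) + 1)) +
    lomega n (n : ℤ) (q ^ (2 * ((n : ℤ) - (i : ℤ) + 2 * k) - 3))

/-- Type `B_n`: `π_r(𝐣)` for `𝐣 = (j_1, …, j_k) ∈ J_{k,r}` (0-based entries
`j 0, …, j (k-1)`); if `k = 0` or `j_k < n` it is
`ω_{r, q_1^{r-i}} ∏_{s=1}^{k} π_r(j_s-1, s-1) π_r(j_s, s)^{-1}`, and if `j_k = n` it is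
`ω_{r, q_1^{r-i}} (∏_{s=1}^{k-1} π_r(j_s-1, s-1) π_r(j_s, s)^{-1}) · π_r(n-1, k-1) ·
π_r(n, k-1/4)^{-1}` (additively). -/
def piB (n i r k : ℕ) (q : ℂ) (j : ℕ → ℤ) : Pq :=
  if k = 0 ∨ j (k - 1) < (n : ℤ) then
    lomega n (r : ℤ) ((q ^ 2) ^ ((r : ℤ) - (i : ℤ))) +
      ∑ s ∈ Finset.range k,
        (piB1 n i r q (j s - 1) (s : ℤ) - piB1 n i r q (j s) ((s : ℤ) + 1))
  else
    lomega n (r : ℤ) ((q ^ 2) ^ ((r : ℤ) - (i : ℤ))) +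
      ∑ s ∈ Finset.range (k - 1),
        (piB1 n i r q (j s - 1) (s : ℤ) - piB1 n i r q (j s) ((s : ℤ) + 1))
      + piB1 n i r q ((n : ℤ) - 1) ((k : ℤ) - 1) - piBQ n i r q (k : ℤ)

/-- Type `B_n`: `π_r(𝐣,*) = ω_{n, q^{2(n-i+2k)-1}} · ω_{n, q^{2(n+i-2k-2r)-1}}^{-1}`
if `k ≠ M` and `j_k ≠ n` (in particular whenever `k = 0 ≠ M`), and `π_r(𝐣,*) = 1`
otherwise (additively). -/
def piBstar (n i r M k : ℕ) (q : ℂ) (j : ℕ → ℤ) : Pq :=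
  if k ≠ M ∧ (k = 0 ∨ j (k - 1) ≠ (n : ℤ)) then
    lomega n (n : ℤ) (q ^ (2 * ((n : ℤ) - (i : ℤ) + 2 * (k : ℤ)) - 1)) -
      lomega n (n : ℤ) (q ^ (2 * ((n : ℤ) + (i : ℤ) - 2 * (k : ℤ) - 2 * (r : ℤ)) - 1))
  else 0

/-- Membership in `J_{k,r}` (type `B_n`): strictly increasing with `r < j_s ≤ n`,
recorded for the 0-based entries `j 0, …, j (k-1)`. -/
def memJB (n r k : ℕ) (j : ℕ → ℤ) : Prop :=
  (∀ s t, s < t → t < k → j s < j t) ∧ ∀ s < k, (r : ℤ) < j s ∧ j s ≤ (n : ℤ)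

section Aux

variable {q : ℂ}

lemma two_zpow (q : ℂ) (e : ℤ) : (q ^ 2) ^ e = q ^ (2 * e) := by
  rw [← zpow_natCast q 2, ← zpow_mul]
  norm_num

lemma qzpow_eq_one (hq : q ≠ 0) (hroot : ∀ m : ℕ, m ≠ 0 → q ^ m ≠ 1) {d : ℤ}
    (h : q ^ d = 1) : d = 0 := by
  rcases lt_trichotomy d 0 with hd | hd | hd
  · have h1 : q ^ (-d) = 1 := by rw [zpow_neg, h, inv_one]
    have h2 : q ^ ((-d).toNat) = 1 := by
      rw [← zpow_natCast, Int.toNat_of_nonneg (by omega)]; exact h1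
    exact absurd h2 (hroot _ (by omega))
  · exact hd
  · have h2 : q ^ (d.toNat) = 1 := by
      rw [← zpow_natCast, Int.toNat_of_nonneg (by omega)]; exact h
    exact absurd h2 (hroot _ (by omega))

lemma qzpow_inj (hq : q ≠ 0) (hroot : ∀ m : ℕ, m ≠ 0 → q ^ m ≠ 1) {a b : ℤ}
    (h : q ^ a = q ^ b) : a = b := by
  have h1 : q ^ (a - b) = 1 := by
    rw [zpow_sub₀ hq, h, div_self (zpow_ne_zero _ hq)]
  have := qzpow_eq_one hq hroot h1
  omega

lemma lomega_apply_s6 (hq : q ≠ 0) (hroot : ∀ m : ℕ, m ≠ 0 → q ^ m ≠ 1)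
    (n : ℕ) (c m F E : ℤ) :
    lomega n c (q ^ F) ((m, q ^ E) : ℤ × ℂ) =
      if (1 ≤ c ∧ c ≤ (n : ℤ)) ∧ c = m ∧ F = E then 1 else 0 := by
  unfold lomega
  split_ifs with h1 h2 h2
  · obtain ⟨_, h2a, h2b⟩ := h2
    rw [Finsupp.single_apply, if_pos (by rw [h2a, h2b])]
  · rw [Finsupp.single_apply, if_neg]
    intro hp
    exact h2 ⟨h1, (Prod.ext_iff.mp hp).1, qzpow_inj hq hroot (Prod.ext_iff.mp hp).2⟩
  · exact absurd h2.1 h1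
  · simp

lemma piB1_apply (hq : q ≠ 0) (hroot : ∀ m : ℕ, m ≠ 0 → q ^ m ≠ 1)
    (n i r : ℕ) (c s m E : ℤ) :
    piB1 n i r q c s ((m, q ^ E) : ℤ × ℂ) =
      (if (1 ≤ c ∧ c ≤ (n : ℤ)) ∧ c = m ∧ 2 * (2 * (n : ℤ) - 1 - (i : ℤ) - c + 2 * s) = E then 1 else 0)
      - (if (1 ≤ c ∧ c ≤ (n : ℤ)) ∧ c = m ∧ 2 * ((i : ℤ) + c - 2 * s - 2 * (r : ℤ)) = E then 1 else 0) := by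
  unfold piB1
  rw [two_zpow, two_zpow, Finsupp.add_apply, Finsupp.neg_apply,
    lomega_apply_s6 hq hroot, lomega_apply_s6 hq hroot, neg_add_eq_sub]

end Aux
section Aux2

variable {q : ℂ}

lemma piBstar_apply_odd (hq : q ≠ 0) (hroot : ∀ m : ℕ, m ≠ 0 → q ^ m ≠ 1)
    (n i r M k : ℕ) (j : ℕ → ℤ) (hn : 2 ≤ n) (E : ℤ) :
    piBstar n i r M k q j (((n : ℤ), q ^ E) : ℤ × ℂ) =
      if k ≠ M ∧ (k = 0 ∨ j (k - 1) ≠ (n : ℤ)) then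
        ((if 2 * ((n : ℤ) - (i : ℤ) + 2 * (k : ℤ)) - 1 = E then 1 else 0)
          - (if 2 * ((n : ℤ) + (i : ℤ) - 2 * (k : ℤ) - 2 * (r : ℤ)) - 1 = E then 1 else 0))
      else 0 := by
  unfold piBstar
  by_cases hc : k ≠ M ∧ (k = 0 ∨ j (k - 1) ≠ (n : ℤ))
  · rw [if_pos hc, if_pos hc, Finsupp.sub_apply, lomega_apply_s6 hq hroot, lomega_apply_s6 hq hroot]
    split_ifs <;> omega
  · rw [if_neg hc, if_neg hc]
    simp

lemma piB_apply_odd (hq : q ≠ 0) (hroot : ∀ m : ℕ, m ≠ 0 → q ^ m ≠ 1)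
    (n i r k : ℕ) (j : ℕ → ℤ) (hn : 2 ≤ n) (E X : ℤ) (hE : E = 2 * X + 1) :
    piB n i r k q j (((n : ℤ), q ^ E) : ℤ × ℂ) =
      if k = 0 ∨ j (k - 1) < (n : ℤ) then 0 else
        ((if 2 * ((i : ℤ) + (n : ℤ) - 2 * (k : ℤ) - 2 * (r : ℤ)) + 1 = E then 1 else 0)
          - (if 2 * ((n : ℤ) - (i : ℤ) + 2 * (k : ℤ)) - 3 = E then 1 else 0)) := by
  have hL : lomega n (r : ℤ) ((q ^ 2) ^ ((r : ℤ) - (i : ℤ))) (((n : ℤ), q ^ E) : ℤ × ℂ) = 0 := by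
    rw [two_zpow, lomega_apply_s6 hq hroot, if_neg (by omega)]
  have hSum0 : ∀ m : ℕ,
      (∑ s ∈ Finset.range m,
        (piB1 n i r q (j s - 1) (s : ℤ) - piB1 n i r q (j s) ((s : ℤ) + 1)))
        (((n : ℤ), q ^ E) : ℤ × ℂ) = 0 := by
    intro m
    rw [Finsupp.finset_sum_apply]
    apply Finset.sum_eq_zero
    intro s _
    rw [Finsupp.sub_apply, piB1_apply hq hroot, piB1_apply hq hroot,
      if_neg (by omega), if_neg (by omega), if_neg (by omega), if_neg (by omega)]
    simp
  unfold piB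
  by_cases hc : k = 0 ∨ j (k - 1) < (n : ℤ)
  · rw [if_pos hc, if_pos hc, Finsupp.add_apply, hL, hSum0]
    simp
  · rw [if_neg hc, if_neg hc, Finsupp.sub_apply, Finsupp.add_apply, Finsupp.add_apply, hL,
      hSum0]
    have h1 : piB1 n i r q ((n : ℤ) - 1) ((k : ℤ) - 1) (((n : ℤ), q ^ E) : ℤ × ℂ) = 0 := by
      rw [piB1_apply hq hroot, if_neg (by omega), if_neg (by omega)]
      simp
    rw [h1]
    unfold piBQ
    rw [Finsupp.add_apply, Finsupp.neg_apply, lomega_apply_s6 hq hroot, lomega_apply_s6 hq hroot]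
    split_ifs <;> omega

end Aux2
section Aux3

variable {q : ℂ}

lemma step1 (hq : q ≠ 0) (hroot : ∀ m : ℕ, m ≠ 0 → q ^ m ≠ 1)
    (n i r M k k' : ℕ) (j j' : ℕ → ℤ) (hn : 2 ≤ n) (hri : r ≤ i)
    (hM : M = (i - r) / 2) (hk : k ≤ M) (hk' : k' ≤ M)
    (hj : memJB n r k j) (hj' : memJB n r k' j')
    (heq : piB n i r k q j + piBstar n i r M k q j =
      piB n i r k' q j' + piBstar n i r M k' q j') :
    k = k' ∧ ((k = 0 ∨ j (k - 1) < (n : ℤ)) ↔ (k' = 0 ∨ j' (k' - 1) < (n : ℤ))) := by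
  have app : ∀ E X : ℤ, E = 2 * X + 1 →
      ((if k = 0 ∨ j (k - 1) < (n : ℤ) then (0 : ℤ) else
        ((if 2 * ((i : ℤ) + (n : ℤ) - 2 * (k : ℤ) - 2 * (r : ℤ)) + 1 = E then (1 : ℤ) else 0)
          - (if 2 * ((n : ℤ) - (i : ℤ) + 2 * (k : ℤ)) - 3 = E then (1 : ℤ) else 0)))
      + (if k ≠ M ∧ (k = 0 ∨ j (k - 1) ≠ (n : ℤ)) then
        ((if 2 * ((n : ℤ) - (i : ℤ) + 2 * (k : ℤ)) - 1 = E then (1 : ℤ) else 0)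
          - (if 2 * ((n : ℤ) + (i : ℤ) - 2 * (k : ℤ) - 2 * (r : ℤ)) - 1 = E then (1 : ℤ) else 0))
        else (0 : ℤ)))
      = ((if k' = 0 ∨ j' (k' - 1) < (n : ℤ) then (0 : ℤ) else
        ((if 2 * ((i : ℤ) + (n : ℤ) - 2 * (k' : ℤ) - 2 * (r : ℤ)) + 1 = E then (1 : ℤ) else 0)
          - (if 2 * ((n : ℤ) - (i : ℤ) + 2 * (k' : ℤ)) - 3 = E then (1 : ℤ) else 0)))
      + (if k' ≠ M ∧ (k' = 0 ∨ j' (k' - 1) ≠ (n : ℤ)) then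
        ((if 2 * ((n : ℤ) - (i : ℤ) + 2 * (k' : ℤ)) - 1 = E then (1 : ℤ) else 0)
          - (if 2 * ((n : ℤ) + (i : ℤ) - 2 * (k' : ℤ) - 2 * (r : ℤ)) - 1 = E then (1 : ℤ) else 0))
        else (0 : ℤ))) := by
    intro E X hE
    have h := DFunLike.congr_fun heq (((n : ℤ), q ^ E) : ℤ × ℂ)
    rwa [Finsupp.add_apply, Finsupp.add_apply, piB_apply_odd hq hroot n i r k j hn E X hE,
      piB_apply_odd hq hroot n i r k' j' hn E X hE,
      piBstar_apply_odd hq hroot n i r M k j hn E,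
      piBstar_apply_odd hq hroot n i r M k' j' hn E] at h
  by_cases hb : k = 0 ∨ j (k - 1) < (n : ℤ) <;>
    by_cases hb' : k' = 0 ∨ j' (k' - 1) < (n : ℤ)
  · -- both branch 1
    refine ⟨?_, iff_of_true hb hb'⟩
    by_cases hkM : k = M <;> by_cases hkM' : k' = M
    · omega
    · -- k = M, k' ≠ M : contradiction via E = e₊(k')
      exfalso
      have h := app (2 * ((n : ℤ) - (i : ℤ) + 2 * (k' : ℤ)) - 1)
        ((n : ℤ) - (i : ℤ) + 2 * (k' : ℤ) - 1) (by ring)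
      rw [if_pos hb, if_pos hb',
        if_neg (show ¬(k ≠ M ∧ (k = 0 ∨ j (k - 1) ≠ (n : ℤ))) from fun hcc => hcc.1 hkM),
        if_pos (show k' ≠ M ∧ (k' = 0 ∨ j' (k' - 1) ≠ (n : ℤ)) from
          ⟨hkM', hb'.imp id ne_of_lt⟩)] at h
      split_ifs at h <;> omega
    · exfalso
      have h := app (2 * ((n : ℤ) - (i : ℤ) + 2 * (k : ℤ)) - 1)
        ((n : ℤ) - (i : ℤ) + 2 * (k : ℤ) - 1) (by ring)
      rw [if_pos hb, if_pos hb',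
        if_neg (show ¬(k' ≠ M ∧ (k' = 0 ∨ j' (k' - 1) ≠ (n : ℤ))) from fun hcc => hcc.1 hkM'),
        if_pos (show k ≠ M ∧ (k = 0 ∨ j (k - 1) ≠ (n : ℤ)) from
          ⟨hkM, hb.imp id ne_of_lt⟩)] at h
      split_ifs at h <;> omega
    · -- both stars on
      have h := app (2 * ((n : ℤ) - (i : ℤ) + 2 * (k : ℤ)) - 1)
        ((n : ℤ) - (i : ℤ) + 2 * (k : ℤ) - 1) (by ring)
      rw [if_pos hb, if_pos hb',
        if_pos (show k ≠ M ∧ (k = 0 ∨ j (k - 1) ≠ (n : ℤ)) from ⟨hkM, hb.imp id ne_of_lt⟩),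
        if_pos (show k' ≠ M ∧ (k' = 0 ∨ j' (k' - 1) ≠ (n : ℤ)) from
          ⟨hkM', hb'.imp id ne_of_lt⟩)] at h
      split_ifs at h <;> omega
  · -- branch1 vs branch2 : contradiction
    exfalso
    have hjn' : j' (k' - 1) = (n : ℤ) := by
      have := (hj'.2 (k' - 1) (by omega)).2
      omega
    have h := app (2 * ((i : ℤ) + (n : ℤ) - 2 * (k' : ℤ) - 2 * (r : ℤ)) + 1)
      ((i : ℤ) + (n : ℤ) - 2 * (k' : ℤ) - 2 * (r : ℤ)) (by ring)
    rw [if_pos hb, if_neg hb',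
      if_neg (show ¬(k' ≠ M ∧ (k' = 0 ∨ j' (k' - 1) ≠ (n : ℤ))) from fun hcc => by
        rcases hcc.2 with h0 | hne
        · exact hb' (Or.inl h0)
        · exact hne hjn')] at h
    by_cases hsc : k ≠ M ∧ (k = 0 ∨ j (k - 1) ≠ (n : ℤ))
    · rw [if_pos hsc] at h
      split_ifs at h <;> omega
    · rw [if_neg hsc] at h
      split_ifs at h <;> omega
  · exfalso
    have hjn : j (k - 1) = (n : ℤ) := by
      have := (hj.2 (k - 1) (by omega)).2
      omega
    have h := app (2 * ((i : ℤ) + (n : ℤ) - 2 * (k : ℤ) - 2 * (r : ℤ)) + 1)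
      ((i : ℤ) + (n : ℤ) - 2 * (k : ℤ) - 2 * (r : ℤ)) (by ring)
    rw [if_pos hb', if_neg hb,
      if_neg (show ¬(k ≠ M ∧ (k = 0 ∨ j (k - 1) ≠ (n : ℤ))) from fun hcc => by
        rcases hcc.2 with h0 | hne
        · exact hb (Or.inl h0)
        · exact hne hjn)] at h
    by_cases hsc : k' ≠ M ∧ (k' = 0 ∨ j' (k' - 1) ≠ (n : ℤ))
    · rw [if_pos hsc] at h
      split_ifs at h <;> omega
    · rw [if_neg hsc] at h
      split_ifs at h <;> omega
  · -- both branch 2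
    refine ⟨?_, iff_of_false hb hb'⟩
    have hjn : j (k - 1) = (n : ℤ) := by
      have := (hj.2 (k - 1) (by omega)).2
      omega
    have hjn' : j' (k' - 1) = (n : ℤ) := by
      have := (hj'.2 (k' - 1) (by omega)).2
      omega
    have h := app (2 * ((i : ℤ) + (n : ℤ) - 2 * (k : ℤ) - 2 * (r : ℤ)) + 1)
      ((i : ℤ) + (n : ℤ) - 2 * (k : ℤ) - 2 * (r : ℤ)) (by ring)
    rw [if_neg hb, if_neg hb',
      if_neg (show ¬(k ≠ M ∧ (k = 0 ∨ j (k - 1) ≠ (n : ℤ))) from fun hcc => by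
        rcases hcc.2 with h0 | hne
        · exact hb (Or.inl h0)
        · exact hne hjn),
      if_neg (show ¬(k' ≠ M ∧ (k' = 0 ∨ j' (k' - 1) ≠ (n : ℤ))) from fun hcc => by
        rcases hcc.2 with h0 | hne
        · exact hb' (Or.inl h0)
        · exact hne hjn')] at h
    split_ifs at h <;> omega

end Aux3
section Aux4

variable {q : ℂ}

lemma sums_aux (hq : q ≠ 0) (hroot : ∀ m : ℕ, m ≠ 0 → q ^ m ≠ 1)
    (n i r k₀ : ℕ) (j j' : ℕ → ℤ)
    (hb : ∀ s, s < k₀ → (r : ℤ) < j s ∧ j s < (n : ℤ))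
    (hb' : ∀ s, s < k₀ → (r : ℤ) < j' s ∧ j' s < (n : ℤ))
    (s₀ : ℕ) (hs₀ : s₀ < k₀) (hmin : ∀ t, t < s₀ → j t = j' t)
    (hlt : j' s₀ < j s₀)
    (hS : (∑ s ∈ Finset.range k₀,
        (piB1 n i r q (j s - 1) (s : ℤ) - piB1 n i r q (j s) ((s : ℤ) + 1)))
      = ∑ s ∈ Finset.range k₀,
        (piB1 n i r q (j' s - 1) (s : ℤ) - piB1 n i r q (j' s) ((s : ℤ) + 1))) :
    False := by
  have h := DFunLike.congr_fun hS
    ((j s₀ - 1, q ^ (2 * ((i : ℤ) + j s₀ - 2 * (s₀ : ℤ) - 2 * (r : ℤ) - 1))) : ℤ × ℂ)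
  rw [Finsupp.finset_sum_apply, Finsupp.finset_sum_apply] at h
  have hterm : ∀ s ∈ Finset.range k₀,
      (piB1 n i r q (j s - 1) (s : ℤ) - piB1 n i r q (j s) ((s : ℤ) + 1))
        ((j s₀ - 1, q ^ (2 * ((i : ℤ) + j s₀ - 2 * (s₀ : ℤ) - 2 * (r : ℤ) - 1))) : ℤ × ℂ)
      = (if s = s₀ then (-1 : ℤ) else 0)
        + (if s + 1 = s₀ ∧ j s = j s₀ - 1 then (1 : ℤ) else 0) := by
    intro s hs
    have hsk := Finset.mem_range.mp hs
    have h1 := hb s hsk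
    have h2 := hb' s₀ hs₀
    have h3 := hb s₀ hs₀
    rw [Finsupp.sub_apply, piB1_apply hq hroot, piB1_apply hq hroot]
    by_cases hss : s = s₀
    · subst hss
      split_ifs <;> omega
    · split_ifs <;> omega
  have hterm' : ∀ s ∈ Finset.range k₀,
      (piB1 n i r q (j' s - 1) (s : ℤ) - piB1 n i r q (j' s) ((s : ℤ) + 1))
        ((j s₀ - 1, q ^ (2 * ((i : ℤ) + j s₀ - 2 * (s₀ : ℤ) - 2 * (r : ℤ) - 1))) : ℤ × ℂ)
      = (if s + 1 = s₀ ∧ j' s = j s₀ - 1 then (1 : ℤ) else 0) := by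
    intro s hs
    have hsk := Finset.mem_range.mp hs
    have h1 := hb' s hsk
    have h2 := hb' s₀ hs₀
    have h3 := hb s₀ hs₀
    rw [Finsupp.sub_apply, piB1_apply hq hroot, piB1_apply hq hroot]
    by_cases hss : s = s₀
    · subst hss
      split_ifs <;> omega
    · split_ifs <;> omega
  rw [Finset.sum_congr rfl hterm, Finset.sum_congr rfl hterm',
    Finset.sum_add_distrib] at h
  have e1 : (∑ s ∈ Finset.range k₀, (if s = s₀ then (-1 : ℤ) else 0)) = -1 := by
    rw [Finset.sum_ite_eq' (Finset.range k₀) s₀ (fun _ => (-1 : ℤ)),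
      if_pos (Finset.mem_range.mpr hs₀)]
  have e2 : (∑ s ∈ Finset.range k₀, (if s + 1 = s₀ ∧ j s = j s₀ - 1 then (1 : ℤ) else 0))
      = if s₀ ≠ 0 ∧ j (s₀ - 1) = j s₀ - 1 then (1 : ℤ) else 0 := by
    have tr : ∀ s ∈ Finset.range k₀,
        (if s + 1 = s₀ ∧ j s = j s₀ - 1 then (1 : ℤ) else 0)
        = if s = s₀ - 1 then (if s₀ ≠ 0 ∧ j (s₀ - 1) = j s₀ - 1 then (1 : ℤ) else 0) else 0 := by
      intro s _
      by_cases hss : s = s₀ - 1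
      · subst hss
        split_ifs <;> omega
      · rw [if_neg hss, if_neg]
        rintro ⟨h1, _⟩
        exact hss (by omega)
    rw [Finset.sum_congr rfl tr,
      Finset.sum_ite_eq' (Finset.range k₀) (s₀ - 1) _, if_pos (Finset.mem_range.mpr (by omega))]
  have e2' : (∑ s ∈ Finset.range k₀, (if s + 1 = s₀ ∧ j' s = j s₀ - 1 then (1 : ℤ) else 0))
      = if s₀ ≠ 0 ∧ j' (s₀ - 1) = j s₀ - 1 then (1 : ℤ) else 0 := by
    have tr : ∀ s ∈ Finset.range k₀,
        (if s + 1 = s₀ ∧ j' s = j s₀ - 1 then (1 : ℤ) else 0)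
        = if s = s₀ - 1 then (if s₀ ≠ 0 ∧ j' (s₀ - 1) = j s₀ - 1 then (1 : ℤ) else 0) else 0 := by
      intro s _
      by_cases hss : s = s₀ - 1
      · subst hss
        split_ifs <;> omega
      · rw [if_neg hss, if_neg]
        rintro ⟨h1, _⟩
        exact hss (by omega)
    rw [Finset.sum_congr rfl tr,
      Finset.sum_ite_eq' (Finset.range k₀) (s₀ - 1) _, if_pos (Finset.mem_range.mpr (by omega))]
  rw [e1, e2, e2'] at h
  by_cases h0 : s₀ = 0
  · subst h0
    split_ifs at h <;> omega
  · have hm := hmin (s₀ - 1) (by omega)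
    split_ifs at h <;> omega

lemma sums_inj (hq : q ≠ 0) (hroot : ∀ m : ℕ, m ≠ 0 → q ^ m ≠ 1)
    (n i r k₀ : ℕ) (j j' : ℕ → ℤ)
    (hb : ∀ s, s < k₀ → (r : ℤ) < j s ∧ j s < (n : ℤ))
    (hb' : ∀ s, s < k₀ → (r : ℤ) < j' s ∧ j' s < (n : ℤ))
    (hS : (∑ s ∈ Finset.range k₀,
        (piB1 n i r q (j s - 1) (s : ℤ) - piB1 n i r q (j s) ((s : ℤ) + 1)))
      = ∑ s ∈ Finset.range k₀,
        (piB1 n i r q (j' s - 1) (s : ℤ) - piB1 n i r q (j' s) ((s : ℤ) + 1))) :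
    ∀ s, s < k₀ → j s = j' s := by
  intro s
  induction s using Nat.strong_induction_on with
  | _ s ih =>
    intro hs
    by_contra hne
    have hmin : ∀ t, t < s → j t = j' t := fun t ht => ih t ht (by omega)
    rcases lt_or_gt_of_ne hne with hlt | hlt
    · exact sums_aux hq hroot n i r k₀ j' j hb' hb s hs (fun t ht => (hmin t ht).symm)
        hlt hS.symm
    · exact sums_aux hq hroot n i r k₀ j j' hb hb' s hs hmin hlt hS

end Aux4

/-- type B_n: the map `𝐣 ↦ π_r(𝐣)·π_r(𝐣,*)` from
`J_r = ⋃_{k=0}^{M} J_{k,r}` to `P_q` is injective. -/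
theorem piB_injective (n i r M : ℕ) (q : ℂ) (hn : 2 ≤ n) (hq : q ≠ 0)
    (hroot : ∀ m : ℕ, m ≠ 0 → q ^ m ≠ 1) (hi : 1 ≤ i) (hin : i < n)
    (hri : r ≤ i) (hM : M = (i - r) / 2) (k k' : ℕ) (hk : k ≤ M) (hk' : k' ≤ M)
    (j j' : ℕ → ℤ) (hj : memJB n r k j) (hj' : memJB n r k' j')
    (heq : piB n i r k q j + piBstar n i r M k q j =
      piB n i r k' q j' + piBstar n i r M k' q j') :
    k = k' ∧ ∀ s < k, j s = j' s := by
  obtain ⟨hkk, hbiff⟩ := step1 hq hroot n i r M k k' j j' hn hri hM hk hk' hj hj' heq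
  subst hkk
  refine ⟨rfl, ?_⟩
  by_cases hb : k = 0 ∨ j (k - 1) < (n : ℤ)
  · have hb' : k = 0 ∨ j' (k - 1) < (n : ℤ) := hbiff.mp hb
    have hstar_eq : piBstar n i r M k q j = piBstar n i r M k q j' := by
      unfold piBstar
      exact if_congr (by
        constructor
        · rintro ⟨h1, _⟩; exact ⟨h1, hb'.imp id ne_of_lt⟩
        · rintro ⟨h1, _⟩; exact ⟨h1, hb.imp id ne_of_lt⟩) rfl rfl
    rw [hstar_eq] at heq
    have hpb := add_right_cancel heq
    unfold piB at hpb
    rw [if_pos hb, if_pos hb'] at hpb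
    have hS := add_left_cancel hpb
    -- ranges
    have hrange : ∀ s, s < k → (r : ℤ) < j s ∧ j s < (n : ℤ) := by
      intro s hs
      refine ⟨(hj.2 s hs).1, ?_⟩
      rcases hb with h0 | hlt
      · omega
      · rcases Nat.lt_or_ge s (k - 1) with hsk | hsk
        · exact lt_trans (hj.1 s (k - 1) hsk (by omega)) hlt
        · have : s = k - 1 := by omega
          rw [this]; exact hlt
    have hrange' : ∀ s, s < k → (r : ℤ) < j' s ∧ j' s < (n : ℤ) := by
      intro s hs
      refine ⟨(hj'.2 s hs).1, ?_⟩
      rcases hb' with h0 | hlt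
      · omega
      · rcases Nat.lt_or_ge s (k - 1) with hsk | hsk
        · exact lt_trans (hj'.1 s (k - 1) hsk (by omega)) hlt
        · have : s = k - 1 := by omega
          rw [this]; exact hlt
    exact sums_inj hq hroot n i r k j j' hrange hrange' hS
  · have hb' : ¬(k = 0 ∨ j' (k - 1) < (n : ℤ)) := fun h => hb (hbiff.mpr h)
    have hk0 : k ≠ 0 := fun h => hb (Or.inl h)
    have hjn : j (k - 1) = (n : ℤ) := by
      have := (hj.2 (k - 1) (by omega)).2
      have h2 : ¬ j (k - 1) < (n : ℤ) := fun h => hb (Or.inr h)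
      omega
    have hjn' : j' (k - 1) = (n : ℤ) := by
      have := (hj'.2 (k - 1) (by omega)).2
      have h2 : ¬ j' (k - 1) < (n : ℤ) := fun h => hb' (Or.inr h)
      omega
    have hst : piBstar n i r M k q j = 0 := by
      unfold piBstar
      rw [if_neg]
      rintro ⟨_, h0 | hne⟩
      · exact hk0 h0
      · exact hne hjn
    have hst' : piBstar n i r M k q j' = 0 := by
      unfold piBstar
      rw [if_neg]
      rintro ⟨_, h0 | hne⟩
      · exact hk0 h0
      · exact hne hjn'
    rw [hst, hst', add_zero, add_zero] at heq
    unfold piB at heq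
    rw [if_neg hb, if_neg hb'] at heq
    have h2 := sub_left_inj.mp heq
    have h3 := add_right_cancel h2
    have hS := add_left_cancel h3
    have hrange : ∀ s, s < k - 1 → (r : ℤ) < j s ∧ j s < (n : ℤ) := by
      intro s hs
      refine ⟨(hj.2 s (by omega)).1, ?_⟩
      have := hj.1 s (k - 1) hs (by omega)
      omega
    have hrange' : ∀ s, s < k - 1 → (r : ℤ) < j' s ∧ j' s < (n : ℤ) := by
      intro s hs
      refine ⟨(hj'.2 s (by omega)).1, ?_⟩
      have := hj'.1 s (k - 1) hs (by omega)
      omega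
    have hmain := sums_inj hq hroot n i r (k - 1) j j' hrange hrange' hS
    intro s hs
    rcases Nat.lt_or_ge s (k - 1) with hsk | hsk
    · exact hmain s hsk
    · have : s = k - 1 := by omega
      rw [this, hjn, hjn']
end
end

section
/- (Type D_n, Weyl group computation.) For all integers r, j with 2 ≤ r ≤ n−2 and r−1 ≤ j ≤ n, the linear map w_{r,j} satisfies w_{r,j}(ω_r) = ω_{r−2} + α_j. -/
/-- The simple reflection `s_i` of type `D_n` acting on coordinate vectors
(coordinates indexed `1, …, n`): for `i ≤ n-1` it swaps the `i`-th and `(i+1)`-th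
coordinates, and `s_n` sends `(…, x_{n-1}, x_n)` to `(…, -x_n, -x_{n-1})`. -/
def refD (n : ℕ) (i : ℤ) (x : ℤ → ℝ) : ℤ → ℝ :=
  if i ≤ (n : ℤ) - 1 then
    fun t => if t = i then x (i + 1) else if t = i + 1 then x i else x t
  else
    fun t => if t = (n : ℤ) - 1 then -x (n : ℤ)
             else if t = (n : ℤ) then -x ((n : ℤ) - 1) else x t

/-- The simple root `α_j` of type `D_n`: `α_j = ε_j - ε_{j+1}` for `j ≤ n-1`
and `α_n = ε_{n-1} + ε_n`. -/
def alphaD (n : ℕ) (j : ℤ) : ℤ → ℝ := fun t =>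
  if j ≤ (n : ℤ) - 1 then (if t = j then 1 else if t = j + 1 then -1 else 0)
  else (if t = (n : ℤ) - 1 ∨ t = (n : ℤ) then 1 else 0)

/-- The list of indices of `w_{r,j}` in type `D_n`: for `r-1 ≤ j ≤ n-2`,
`w_{r,j} = s_{j-1} ⋯ s_{r-1} · s_{j+1} ⋯ s_{n-2} · s_n s_{n-1} ⋯ s_r`; for
`j ∈ {n-1, n}`, `w_{r,j} = s_{n-2} ⋯ s_{r-1} · s_{j'} · s_{n-2} ⋯ s_r` with
`j'` the other element of `{n-1, n}` (rightmost factor applied first, via `foldr`). -/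
def wDIdx (n : ℕ) (r j : ℤ) : List ℤ :=
  if j ≤ (n : ℤ) - 2 then
    ((List.range (j + 1 - r).toNat).map fun t => j - 1 - (t : ℤ))
      ++ ((List.range ((n : ℤ) - 2 - j).toNat).map fun t => j + 1 + (t : ℤ))
      ++ ((List.range ((n : ℤ) + 1 - r).toNat).map fun t => (n : ℤ) - (t : ℤ))
  else
    ((List.range ((n : ℤ) - r).toNat).map fun t => (n : ℤ) - 2 - (t : ℤ))
      ++ [if j = (n : ℤ) - 1 then (n : ℤ) else (n : ℤ) - 1]
      ++ ((List.range ((n : ℤ) - 1 - r).toNat).map fun t => (n : ℤ) - 2 - (t : ℤ))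

/-- Bridge between the coerced-list form produced by elaborating `wDIdx` and the
`ℕ`-indexed `List.map` form used in the lemmas below. -/
lemma coe_map_range (k : ℕ) (f : ℤ → ℤ) :
    ((List.range k).map fun t => f (t : ℤ)) = (List.range k).map (fun t : ℕ => f (t : ℤ)) := by
  simp only [List.bind_eq_flatMap, List.pure_def, List.flatMap_singleton', List.map_map,
    List.flatMap_def, Function.comp]
  induction List.range k with
  | nil => simp
  | cons h t ih => simp_all

/-- auxiliary vector: `ω_m + c·ε_p + d·ε_q`. -/
def Wv (m p q : ℤ) (c d : ℝ) : ℤ → ℝ := fun t =>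
  (if 1 ≤ t ∧ t ≤ m then (1:ℝ) else 0) + (if t = p then c else 0) + (if t = q then d else 0)

lemma step_up (n : ℕ) (m p q : ℤ) (c d : ℝ) (hm : m < p) (hp : p ≤ (n:ℤ)-1)
    (hq : q < p ∨ p + 1 < q) :
    refD n p (Wv m p q c d) = Wv m (p+1) q c d := by
  funext t
  simp only [refD, if_pos hp, Wv]
  split_ifs <;> (first | omega | ring)

lemma step_down (n : ℕ) (m i q : ℤ) (c d : ℝ) (hm : m < i) (hp : i ≤ (n:ℤ)-1)
    (hq : q < i ∨ i + 1 < q) :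
    refD n i (Wv m (i+1) q c d) = Wv m i q c d := by
  funext t
  simp only [refD, if_pos hp, Wv]
  split_ifs <;> (first | omega | ring)

lemma step_n_A (n : ℕ) (m q : ℤ) (c d : ℝ) (hn : 4 ≤ n) (hm : m < (n:ℤ)-1) (hq : q < (n:ℤ)-1) :
    refD n (n:ℤ) (Wv m (n:ℤ) q c d) = Wv m ((n:ℤ)-1) q (-c) d := by
  have h : ¬ ((n:ℤ) ≤ (n:ℤ) - 1) := by omega
  funext t
  simp only [refD, if_neg h, Wv]
  split_ifs <;> (first | omega | ring)

lemma step_n_B (n : ℕ) (m q : ℤ) (c d : ℝ) (hn : 4 ≤ n) (hm : m < (n:ℤ)-1) (hq : q < (n:ℤ)-1) :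
    refD n (n:ℤ) (Wv m ((n:ℤ)-1) q c d) = Wv m (n:ℤ) q (-c) d := by
  have h : ¬ ((n:ℤ) ≤ (n:ℤ) - 1) := by omega
  funext t
  simp only [refD, if_neg h, Wv]
  split_ifs <;> (first | omega | ring)

lemma foldr_D (n : ℕ) (a m q : ℤ) (c d : ℝ) (k : ℕ)
    (h1 : m + k ≤ a) (h2 : a ≤ (n:ℤ) - 1) (h3 : q < a - k + 1 ∨ a + 1 < q) :
    ((List.range k).map (fun t : ℕ => a - (t:ℤ))).foldr (refD n) (Wv m (a - k + 1) q c d)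
      = Wv m (a + 1) q c d := by
  induction k with
  | zero => simp
  | succ k ih =>
    rw [List.range_succ, List.map_append, List.foldr_append]
    push_cast at h1 h3 ⊢
    simp only [List.map_cons, List.map_nil, List.foldr_cons, List.foldr_nil]
    have e1 : a - ((k:ℤ)+1) + 1 = a - (k:ℤ) := by ring
    rw [e1, step_up n m (a - (k:ℤ)) q c d (by omega) (by omega) (by omega)]
    exact ih (by omega) (by omega)

lemma foldr_I (n : ℕ) (a m q : ℤ) (c d : ℝ) (k : ℕ)
    (h1 : m < a) (h2 : a + k ≤ (n:ℤ)) (h3 : q < a ∨ a + k < q) :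
    ((List.range k).map (fun t : ℕ => a + (t:ℤ))).foldr (refD n) (Wv m (a + k) q c d)
      = Wv m a q c d := by
  induction k with
  | zero => simp
  | succ k ih =>
    rw [List.range_succ, List.map_append, List.foldr_append]
    push_cast at h2 h3 ⊢
    simp only [List.map_cons, List.map_nil, List.foldr_cons, List.foldr_nil]
    have e1 : a + ((k:ℤ)+1) = (a + (k:ℤ)) + 1 := by ring
    rw [e1, step_down n m (a + (k:ℤ)) q c d (by omega) (by omega) (by omega)]
    exact ih (by omega) (by omega)

lemma D_succ (a : ℤ) (k : ℕ) :
    (List.range (k+1)).map (fun t : ℕ => a - (t:ℤ))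
      = a :: (List.range k).map (fun t : ℕ => (a - 1) - (t:ℤ)) := by
  rw [List.range_succ_eq_map, List.map_cons, List.map_map]
  simp only [Nat.cast_zero, sub_zero]
  congr 1
  apply List.map_congr_left
  intro t _
  simp only [Function.comp_apply]
  push_cast
  ring

lemma omega_Wv (r : ℤ) (hr : 1 ≤ r) : omegaW r = Wv (r-1) r 0 1 0 := by
  funext t
  simp only [omegaW, Wv]
  split_ifs <;> (first | omega | ring)

lemma Wv_shift (m p : ℤ) (c : ℝ) (h1 : 1 ≤ m) (h2 : m < p) :
    Wv m p 0 c 0 = Wv (m-1) m p 1 c := by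
  funext t
  simp only [Wv]
  split_ifs <;> (first | omega | ring)

lemma final_le (n : ℕ) (m j : ℤ) (h0 : 0 ≤ m) (h1 : m < j) (h2 : j ≤ (n:ℤ) - 1) :
    Wv m j (j+1) 1 (-1) = omegaW m + alphaD n j := by
  funext t
  simp only [Wv, omegaW, alphaD, Pi.add_apply, if_pos h2]
  split_ifs <;> (first | omega | ring)

lemma final_n (n : ℕ) (m : ℤ) (hn : 4 ≤ n) (h0 : 0 ≤ m) (h1 : m < (n:ℤ) - 1) :
    Wv m ((n:ℤ)-1) (n:ℤ) 1 1 = omegaW m + alphaD n (n:ℤ) := by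
  have h : ¬ ((n:ℤ) ≤ (n:ℤ) - 1) := by omega
  funext t
  simp only [Wv, omegaW, alphaD, Pi.add_apply, if_neg h]
  split_ifs <;> (first | omega | ring)

/-- type D_n: for `2 ≤ r ≤ n-2` and `r - 1 ≤ j ≤ n`,
`w_{r,j}(ω_r) = ω_{r-2} + α_j`. -/
theorem wrj_omega_D (n : ℕ) (hn : 4 ≤ n) (r j : ℤ) (hr : 2 ≤ r)
    (hrn : r ≤ (n : ℤ) - 2) (hj1 : r - 1 ≤ j) (hj2 : j ≤ (n : ℤ)) :
    (wDIdx n r j).foldr (refD n) (omegaW r) = omegaW (r - 2) + alphaD n j := by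
  by_cases hc : j ≤ (n : ℤ) - 2
  · -- case r - 1 ≤ j ≤ n - 2
    simp only [wDIdx, if_pos hc, coe_map_range]
    rw [List.foldr_append, List.foldr_append]
    -- block C = s_n s_{n-1} ⋯ s_r
    obtain ⟨k3, hk3⟩ : ∃ k : ℕ, ((n:ℤ)+1-r).toNat = k + 1 :=
      ⟨((n:ℤ)+1-r).toNat - 1, by omega⟩
    rw [hk3, D_succ, List.foldr_cons, omega_Wv r (by omega)]
    have eC : Wv (r-1) r 0 1 0 = Wv (r-1) ((n:ℤ)-1 - (k3:ℤ) + 1) 0 1 0 := by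
      rw [show (n:ℤ)-1 - (k3:ℤ) + 1 = r from by omega]
    rw [eC, foldr_D n ((n:ℤ)-1) (r-1) 0 1 0 k3 (by omega) (by omega) (by omega)]
    have eC2 : Wv (r-1) ((n:ℤ)-1+1) 0 1 0 = Wv (r-1) (n:ℤ) 0 1 0 := by
      rw [show (n:ℤ)-1+1 = (n:ℤ) from by ring]
    rw [eC2, step_n_A n (r-1) 0 1 0 hn (by omega) (by omega)]
    -- block B = s_{j+1} ⋯ s_{n-2}
    set k2 := ((n:ℤ)-2-j).toNat with hk2
    have eB : Wv (r-1) ((n:ℤ)-1) 0 (-1) 0 = Wv (r-1) ((j+1) + (k2:ℤ)) 0 (-1) 0 := by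
      rw [show (j+1) + (k2:ℤ) = (n:ℤ)-1 from by omega]
    rw [eB, foldr_I n (j+1) (r-1) 0 (-1) 0 k2 (by omega) (by omega) (by omega)]
    -- block A = s_{j-1} ⋯ s_{r-1}
    rw [Wv_shift (r-1) (j+1) (-1) (by omega) (by omega)]
    set k1 := (j+1-r).toNat with hk1
    have eA : Wv (r-1-1) (r-1) (j+1) 1 (-1)
        = Wv (r-2) ((j-1) - (k1:ℤ) + 1) (j+1) 1 (-1) := by
      rw [show (j-1) - (k1:ℤ) + 1 = r-1 from by omega, show r-1-1 = r-2 from by ring]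
    rw [eA, foldr_D n (j-1) (r-2) (j+1) 1 (-1) k1 (by omega) (by omega) (by omega)]
    have eF : Wv (r-2) (j-1+1) (j+1) 1 (-1) = Wv (r-2) j (j+1) 1 (-1) := by
      rw [show j-1+1 = j from by ring]
    rw [eF]
    exact final_le n (r-2) j (by omega) (by omega) (by omega)
  · -- case j ∈ {n-1, n}
    simp only [wDIdx, if_neg hc, coe_map_range]
    rw [List.foldr_append, List.foldr_append]
    simp only [List.foldr_cons, List.foldr_nil]
    -- inner block s_{n-2} ⋯ s_r
    rw [omega_Wv r (by omega)]
    set k' := ((n:ℤ)-1-r).toNat with hk'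
    have eC : Wv (r-1) r 0 1 0 = Wv (r-1) ((n:ℤ)-2 - (k':ℤ) + 1) 0 1 0 := by
      rw [show (n:ℤ)-2 - (k':ℤ) + 1 = r from by omega]
    rw [eC, foldr_D n ((n:ℤ)-2) (r-1) 0 1 0 k' (by omega) (by omega) (by omega)]
    have eC2 : Wv (r-1) ((n:ℤ)-2+1) 0 1 0 = Wv (r-1) ((n:ℤ)-1) 0 1 0 := by
      rw [show (n:ℤ)-2+1 = (n:ℤ)-1 from by ring]
    rw [eC2]
    set k := ((n:ℤ)-r).toNat with hk
    have hj : j = (n:ℤ) - 1 ∨ j = (n:ℤ) := by omega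
    rcases hj with h | h
    · rw [if_pos h, step_n_B n (r-1) 0 1 0 hn (by omega) (by omega)]
      rw [Wv_shift (r-1) (n:ℤ) (-1) (by omega) (by omega)]
      have eA : Wv (r-1-1) (r-1) (n:ℤ) 1 (-1)
          = Wv (r-2) ((n:ℤ)-2 - (k:ℤ) + 1) (n:ℤ) 1 (-1) := by
        rw [show (n:ℤ)-2 - (k:ℤ) + 1 = r-1 from by omega, show r-1-1 = r-2 from by ring]
      rw [eA, foldr_D n ((n:ℤ)-2) (r-2) (n:ℤ) 1 (-1) k (by omega) (by omega) (by omega)]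
      have eF : Wv (r-2) ((n:ℤ)-2+1) (n:ℤ) 1 (-1)
          = Wv (r-2) ((n:ℤ)-1) (((n:ℤ)-1)+1) 1 (-1) := by
        rw [show (n:ℤ)-2+1 = (n:ℤ)-1 from by ring, show ((n:ℤ)-1)+1 = (n:ℤ) from by ring]
      rw [eF, final_le n (r-2) ((n:ℤ)-1) (by omega) (by omega) (by omega), h]
    · rw [if_neg (by omega : ¬ j = (n:ℤ) - 1)]
      rw [step_up n (r-1) ((n:ℤ)-1) 0 1 0 (by omega) (by omega) (by omega)]
      have eM : Wv (r-1) ((n:ℤ)-1+1) 0 1 0 = Wv (r-1) (n:ℤ) 0 1 0 := by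
        rw [show (n:ℤ)-1+1 = (n:ℤ) from by ring]
      rw [eM, Wv_shift (r-1) (n:ℤ) 1 (by omega) (by omega)]
      have eA : Wv (r-1-1) (r-1) (n:ℤ) 1 1
          = Wv (r-2) ((n:ℤ)-2 - (k:ℤ) + 1) (n:ℤ) 1 1 := by
        rw [show (n:ℤ)-2 - (k:ℤ) + 1 = r-1 from by omega, show r-1-1 = r-2 from by ring]
      rw [eA, foldr_D n ((n:ℤ)-2) (r-2) (n:ℤ) 1 1 k (by omega) (by omega) (by omega)]
      have eF : Wv (r-2) ((n:ℤ)-2+1) (n:ℤ) 1 1 = Wv (r-2) ((n:ℤ)-1) (n:ℤ) 1 1 := by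
        rw [show (n:ℤ)-2+1 = (n:ℤ)-1 from by ring]
      rw [eF, final_n n (r-2) hn (by omega) (by omega), h]
end

section
/- (Type D_n.) Let 0 ≤ k, k' ≤ M, 𝐣 ∈ J_{k,r} and 𝐣' ∈ J_{k',r}. (i) π_r(𝐣,+) = π_r(𝐣',+) if and only if k = k', and likewise π_r(𝐣,−) = π_r(𝐣',−) if and only if k = k'; moreover if k = M then π_r(𝐣,+) = π_r(𝐣,−) = 1. (ii) If π_r(𝐣)π_r(𝐣,+) = π_r(𝐣')π_r(𝐣',+) or π_r(𝐣)π_r(𝐣,+) = π_r(𝐣')π_r(𝐣',−), then k = k'; moreover, if k = k' < M then π_r(𝐣)π_r(𝐣,+) ≠ π_r(𝐣')π_r(𝐣',−). -/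
noncomputable section

/-- The (1-based) position function of a partition represented by its finite
support `S ⊆ ℤ`: `ι_S(j_s) = s`. -/
def iotaF (S : Finset ℤ) (x : ℤ) : ℕ := (S.filter (fun y => y ≤ x)).card

/-- Type `D_n`: `π_r(j,s) = ω_{j, q^{i+j-2s-2r}}^{-1} · ω_{j, q^{2n-2-i-j+2s}}`
(additively). -/
def piD1 (n i r : ℕ) (q : ℂ) (j s : ℤ) : Pq :=
  -lomega n j (q ^ ((i : ℤ) + j - 2 * s - 2 * (r : ℤ))) +
    lomega n j (q ^ (2 * (n : ℤ) - 2 - (i : ℤ) - j + 2 * s))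

/-- Type `D_n`: `π_r(𝐣)` for a partition `𝐣 ∈ J_{k,r}` represented by its
underlying `k`-element set `S` (`k = S.card`): if `j_k < n-1` it is
`ω_{r, q^{r-i}} ∏_{s=1}^{k} π_r(j_s-1, s-1) π_r(j_s, s)^{-1}`, and if `j_k = n-1`
there is the extra factor `(ω_{n, q^{n+i-2r-2k-1}}^{-1} ω_{n, q^{n-i+2k-1}})^{-1}`
(additive notation). -/
def piD (n i r : ℕ) (q : ℂ) (S : Finset ℤ) : Pq :=
  lomega n (r : ℤ) (q ^ ((r : ℤ) - (i : ℤ))) +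
    ∑ x ∈ S, (piD1 n i r q (x - 1) ((iotaF S x : ℤ) - 1) -
      piD1 n i r q x (iotaF S x)) +
    (if ((n : ℤ) - 1) ∈ S then
      lomega n (n : ℤ) (q ^ ((n : ℤ) + (i : ℤ) - 2 * (r : ℤ) - 2 * (S.card : ℤ) - 1)) -
        lomega n (n : ℤ) (q ^ ((n : ℤ) - (i : ℤ) + 2 * (S.card : ℤ) - 1))
     else 0)

/-- Type `D_n`: `π_r(𝐣,+) = ω_{n, q^{n-i+2k-1}} ω_{n, q^{n+i-2r-2k-1}}^{-1}`
(additively). -/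
def piDplus (n i r k : ℕ) (q : ℂ) : Pq :=
  lomega n (n : ℤ) (q ^ ((n : ℤ) - (i : ℤ) + 2 * (k : ℤ) - 1)) -
    lomega n (n : ℤ) (q ^ ((n : ℤ) + (i : ℤ) - 2 * (r : ℤ) - 2 * (k : ℤ) - 1))

/-- Type `D_n`: `π_r(𝐣,-) = ω_{n-1, q^{n-i+2k-1}} ω_{n-1, q^{n+i-2r-2k-1}}^{-1}`
(additively). -/
def piDminus (n i r k : ℕ) (q : ℂ) : Pq :=
  lomega n ((n : ℤ) - 1) (q ^ ((n : ℤ) - (i : ℤ) + 2 * (k : ℤ) - 1)) -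
    lomega n ((n : ℤ) - 1) (q ^ ((n : ℤ) + (i : ℤ) - 2 * (r : ℤ) - 2 * (k : ℤ) - 1))

/-- Membership in `J_{k,r}` (type `D_n`): `S` is the underlying `k`-element set
of a strictly increasing sequence `r < j_1 < ⋯ < j_k ≤ n-1`. -/
def memJD (n r k : ℕ) (S : Finset ℤ) : Prop :=
  S.card = k ∧ ∀ x ∈ S, (r : ℤ) < x ∧ x ≤ (n : ℤ) - 1

-- auxiliary lemmas

lemma zpow_inj_of_not_root {q : ℂ} (hq : q ≠ 0)
    (hroot : ∀ m : ℕ, m ≠ 0 → q ^ m ≠ 1) (a b : ℤ) : q ^ a = q ^ b ↔ a = b := by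
  constructor
  · intro h
    by_contra hne
    wlog hab : a < b generalizing a b
    · exact this b a h.symm (Ne.symm hne) (by omega)
    have h1 : q ^ (b - a) = 1 := by
      rw [zpow_sub₀ hq, ← h, div_self (zpow_ne_zero _ hq)]
    have h2 : q ^ ((b - a).toNat) = 1 := by
      rw [← zpow_natCast, Int.toNat_of_nonneg (by omega)]; exact h1
    exact hroot _ (by omega) h2
  · rintro rfl; rfl

lemma lomega_apply_ne {n : ℕ} {j j' : ℤ} {a b : ℂ} (h : j' ≠ j) :
    lomega n j a (j', b) = 0 := by
  unfold lomega
  split_ifs with h'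
  · rw [Finsupp.single_apply, if_neg]
    intro he
    exact h (congrArg Prod.fst he).symm
  · rfl

lemma lomega_apply_eq {n : ℕ} {j : ℤ} (h1 : 1 ≤ j) (h2 : j ≤ (n : ℤ)) (a b : ℂ) :
    lomega n j a (j, b) = if b = a then 1 else 0 := by
  unfold lomega
  rw [if_pos ⟨h1, h2⟩, Finsupp.single_apply]
  by_cases h : b = a
  · rw [if_pos h, if_pos (by rw [h])]
  · rw [if_neg (by simp [Prod.ext_iff]; intro hba; exact (h hba.symm).elim), if_neg h]

lemma piD1_apply_ne {n i r : ℕ} {q : ℂ} {j s j' : ℤ} {b : ℂ} (h : j' ≠ j) :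
    piD1 n i r q j s (j', b) = 0 := by
  unfold piD1
  rw [Finsupp.add_apply, Finsupp.neg_apply, lomega_apply_ne h, lomega_apply_ne h]
  simp

lemma piDplus_apply_n {n i r k : ℕ} {q : ℂ} (hn : 1 ≤ n) (b : ℂ) :
    piDplus n i r k q ((n : ℤ), b) =
      (if b = q ^ ((n : ℤ) - (i : ℤ) + 2 * (k : ℤ) - 1) then 1 else 0) -
      (if b = q ^ ((n : ℤ) + (i : ℤ) - 2 * (r : ℤ) - 2 * (k : ℤ) - 1) then 1 else 0) := by
  unfold piDplus
  rw [Finsupp.sub_apply, lomega_apply_eq (by exact_mod_cast hn) le_rfl,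
    lomega_apply_eq (by exact_mod_cast hn) le_rfl]

lemma piDplus_apply_ne {n i r k : ℕ} {q : ℂ} {j : ℤ} {b : ℂ} (h : j ≠ (n : ℤ)) :
    piDplus n i r k q (j, b) = 0 := by
  unfold piDplus
  rw [Finsupp.sub_apply, lomega_apply_ne h, lomega_apply_ne h, sub_zero]

lemma piDminus_apply_nm1 {n i r k : ℕ} {q : ℂ} (hn : 2 ≤ n) (b : ℂ) :
    piDminus n i r k q ((n : ℤ) - 1, b) =
      (if b = q ^ ((n : ℤ) - (i : ℤ) + 2 * (k : ℤ) - 1) then 1 else 0) -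
      (if b = q ^ ((n : ℤ) + (i : ℤ) - 2 * (r : ℤ) - 2 * (k : ℤ) - 1) then 1 else 0) := by
  unfold piDminus
  rw [Finsupp.sub_apply, lomega_apply_eq (by omega) (by omega),
    lomega_apply_eq (by omega) (by omega)]

lemma piDminus_apply_ne {n i r k : ℕ} {q : ℂ} {j : ℤ} {b : ℂ} (h : j ≠ (n : ℤ) - 1) :
    piDminus n i r k q (j, b) = 0 := by
  unfold piDminus
  rw [Finsupp.sub_apply, lomega_apply_ne h, lomega_apply_ne h, sub_zero]

lemma piD_apply_n {n i r : ℕ} {q : ℂ} {S : Finset ℤ} (hn : 4 ≤ n)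
    (hr : (r : ℤ) < (n : ℤ) - 1) (hb : ∀ x ∈ S, x ≤ (n : ℤ) - 1) (b : ℂ) :
    piD n i r q S ((n : ℤ), b) =
      if ((n : ℤ) - 1) ∈ S then
        (if b = q ^ ((n : ℤ) + (i : ℤ) - 2 * (r : ℤ) - 2 * (S.card : ℤ) - 1) then 1 else 0) -
        (if b = q ^ ((n : ℤ) - (i : ℤ) + 2 * (S.card : ℤ) - 1) then 1 else 0)
      else 0 := by
  unfold piD
  rw [Finsupp.add_apply, Finsupp.add_apply]
  have h1 : lomega n (r : ℤ) (q ^ ((r : ℤ) - (i : ℤ))) ((n : ℤ), b) = 0 :=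
    lomega_apply_ne (by omega)
  have h2 : (∑ x ∈ S, (piD1 n i r q (x - 1) ((iotaF S x : ℤ) - 1) -
      piD1 n i r q x (iotaF S x))) ((n : ℤ), b) = 0 := by
    rw [Finsupp.finset_sum_apply]
    refine Finset.sum_eq_zero fun x hx => ?_
    have hxn := hb x hx
    rw [Finsupp.sub_apply, piD1_apply_ne (by omega), piD1_apply_ne (by omega), sub_zero]
  rw [h1, h2]
  by_cases hmem : ((n : ℤ) - 1) ∈ S
  · rw [if_pos hmem, if_pos hmem, Finsupp.sub_apply,
      lomega_apply_eq (by omega) le_rfl, lomega_apply_eq (by omega) le_rfl]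
    ring
  · rw [if_neg hmem, if_neg hmem]
    simp

lemma piD_apply_nm1 {n i r : ℕ} {q : ℂ} {S : Finset ℤ} (hn : 4 ≤ n)
    (hr : (r : ℤ) < (n : ℤ) - 1) (hb : ∀ x ∈ S, x ≤ (n : ℤ) - 1) (b : ℂ) :
    piD n i r q S ((n : ℤ) - 1, b) =
      if ((n : ℤ) - 1) ∈ S then
        (if b = q ^ ((n : ℤ) + (i : ℤ) - 2 * (r : ℤ) - 2 * (S.card : ℤ) - 1) then 1 else 0) -
        (if b = q ^ ((n : ℤ) - (i : ℤ) + 2 * (S.card : ℤ) - 1) then 1 else 0)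
      else 0 := by
  unfold piD
  rw [Finsupp.add_apply, Finsupp.add_apply]
  have h1 : lomega n (r : ℤ) (q ^ ((r : ℤ) - (i : ℤ))) ((n : ℤ) - 1, b) = 0 :=
    lomega_apply_ne (by omega)
  rw [h1, Finsupp.finset_sum_apply]
  by_cases hmem : ((n : ℤ) - 1) ∈ S
  · rw [if_pos hmem, if_pos hmem]
    have hiota : iotaF S ((n : ℤ) - 1) = S.card := by
      unfold iotaF
      rw [Finset.filter_true_of_mem hb]
    have hsum : ∑ x ∈ S, (piD1 n i r q (x - 1) ((iotaF S x : ℤ) - 1) -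
        piD1 n i r q x (iotaF S x)) ((n : ℤ) - 1, b) =
        (piD1 n i r q ((n : ℤ) - 1 - 1) ((iotaF S ((n : ℤ) - 1) : ℤ) - 1) -
          piD1 n i r q ((n : ℤ) - 1) (iotaF S ((n : ℤ) - 1))) ((n : ℤ) - 1, b) := by
      refine Finset.sum_eq_single_of_mem _ hmem fun x hx hne => ?_
      have hxn := hb x hx
      rw [Finsupp.sub_apply, piD1_apply_ne (by omega), piD1_apply_ne (by omega), sub_zero]
    rw [hsum, Finsupp.sub_apply, piD1_apply_ne (by omega), hiota]
    unfold piD1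
    rw [Finsupp.add_apply, Finsupp.neg_apply,
      lomega_apply_eq (by omega) (by omega), lomega_apply_eq (by omega) (by omega)]
    rw [show (i : ℤ) + ((n : ℤ) - 1) - 2 * (S.card : ℤ) - 2 * (r : ℤ) =
        (n : ℤ) + (i : ℤ) - 2 * (r : ℤ) - 2 * (S.card : ℤ) - 1 from by ring,
      show 2 * (n : ℤ) - 2 - (i : ℤ) - ((n : ℤ) - 1) + 2 * (S.card : ℤ) =
        (n : ℤ) - (i : ℤ) + 2 * (S.card : ℤ) - 1 from by ring]
    rw [Finsupp.sub_apply, lomega_apply_ne (show (n:ℤ) - 1 ≠ (n:ℤ) by omega),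
      lomega_apply_ne (show (n:ℤ) - 1 ≠ (n:ℤ) by omega)]
    ring
  · rw [if_neg hmem, if_neg hmem]
    have hsum : ∑ x ∈ S, (piD1 n i r q (x - 1) ((iotaF S x : ℤ) - 1) -
        piD1 n i r q x (iotaF S x)) ((n : ℤ) - 1, b) = 0 := by
      refine Finset.sum_eq_zero fun x hx => ?_
      have hxn := hb x hx
      have hxne : x ≠ (n : ℤ) - 1 := fun he => hmem (he ▸ hx)
      rw [Finsupp.sub_apply, piD1_apply_ne (by omega), piD1_apply_ne (by omega), sub_zero]
    rw [hsum]
    simp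

lemma aux_pp {n i r M k k' : ℕ} {q : ℂ} {S S' : Finset ℤ}
    (hq2 : ∀ a b : ℤ, q ^ a = q ^ b ↔ a = b)
    (hn : 4 ≤ n) (hrn : (r : ℤ) < (n : ℤ) - 1)
    (hiM : (i : ℤ) = (r : ℤ) + 2 * (M : ℤ)) (hk : k ≤ M) (hk' : k' ≤ M)
    (hSc : S.card = k) (hSb : ∀ x ∈ S, x ≤ (n : ℤ) - 1)
    (hSc' : S'.card = k') (hSb' : ∀ x ∈ S', x ≤ (n : ℤ) - 1)
    (h : piD n i r q S + piDplus n i r k q = piD n i r q S' + piDplus n i r k' q) :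
    k = k' := by
  have Hn : ∀ b : ℂ,
      (if ((n : ℤ) - 1) ∈ S then
          (if b = q ^ ((n:ℤ) + (i:ℤ) - 2*(r:ℤ) - 2*(k:ℤ) - 1) then (1:ℤ) else 0) -
          (if b = q ^ ((n:ℤ) - (i:ℤ) + 2*(k:ℤ) - 1) then 1 else 0) else 0) +
        ((if b = q ^ ((n:ℤ) - (i:ℤ) + 2*(k:ℤ) - 1) then 1 else 0) -
         (if b = q ^ ((n:ℤ) + (i:ℤ) - 2*(r:ℤ) - 2*(k:ℤ) - 1) then 1 else 0)) =
      (if ((n : ℤ) - 1) ∈ S' then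
          (if b = q ^ ((n:ℤ) + (i:ℤ) - 2*(r:ℤ) - 2*(k':ℤ) - 1) then (1:ℤ) else 0) -
          (if b = q ^ ((n:ℤ) - (i:ℤ) + 2*(k':ℤ) - 1) then 1 else 0) else 0) +
        ((if b = q ^ ((n:ℤ) - (i:ℤ) + 2*(k':ℤ) - 1) then 1 else 0) -
         (if b = q ^ ((n:ℤ) + (i:ℤ) - 2*(r:ℤ) - 2*(k':ℤ) - 1) then 1 else 0)) := by
    intro b
    have hx := DFunLike.congr_fun h ((n : ℤ), b)
    rw [Finsupp.add_apply, Finsupp.add_apply, piD_apply_n hn hrn hSb,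
      piD_apply_n hn hrn hSb', piDplus_apply_n (show 1 ≤ n by omega),
      piDplus_apply_n (show 1 ≤ n by omega), hSc, hSc'] at hx
    exact hx
  have Hm : ∀ b : ℂ,
      (if ((n : ℤ) - 1) ∈ S then
          (if b = q ^ ((n:ℤ) + (i:ℤ) - 2*(r:ℤ) - 2*(k:ℤ) - 1) then (1:ℤ) else 0) -
          (if b = q ^ ((n:ℤ) - (i:ℤ) + 2*(k:ℤ) - 1) then 1 else 0) else 0) =
      (if ((n : ℤ) - 1) ∈ S' then
          (if b = q ^ ((n:ℤ) + (i:ℤ) - 2*(r:ℤ) - 2*(k':ℤ) - 1) then (1:ℤ) else 0) -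
          (if b = q ^ ((n:ℤ) - (i:ℤ) + 2*(k':ℤ) - 1) then 1 else 0) else 0) := by
    intro b
    have hx := DFunLike.congr_fun h ((n : ℤ) - 1, b)
    rw [Finsupp.add_apply, Finsupp.add_apply, piD_apply_nm1 hn hrn hSb,
      piD_apply_nm1 hn hrn hSb',
      piDplus_apply_ne (show (n:ℤ) - 1 ≠ (n:ℤ) by omega),
      piDplus_apply_ne (show (n:ℤ) - 1 ≠ (n:ℤ) by omega),
      add_zero, add_zero, hSc, hSc'] at hx
    exact hx
  by_cases hm : ((n : ℤ) - 1) ∈ S <;> by_cases hm' : ((n : ℤ) - 1) ∈ S'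
  · have e1 := Hm (q ^ ((n:ℤ) + (i:ℤ) - 2*(r:ℤ) - 2*(k:ℤ) - 1))
    have e2 := Hm (q ^ ((n:ℤ) + (i:ℤ) - 2*(r:ℤ) - 2*(k':ℤ) - 1))
    rw [if_pos hm, if_pos hm'] at e1 e2
    simp only [hq2] at e1 e2
    split_ifs at e1 e2 <;> omega
  · have e1 := Hm (q ^ ((n:ℤ) + (i:ℤ) - 2*(r:ℤ) - 2*(k:ℤ) - 1))
    have e2 := Hn (q ^ ((n:ℤ) - (i:ℤ) + 2*(k':ℤ) - 1))
    rw [if_pos hm, if_neg hm'] at e1 e2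
    simp only [hq2] at e1 e2
    split_ifs at e1 e2 <;> omega
  · have e1 := Hn (q ^ ((n:ℤ) - (i:ℤ) + 2*(k:ℤ) - 1))
    have e2 := Hm (q ^ ((n:ℤ) + (i:ℤ) - 2*(r:ℤ) - 2*(k':ℤ) - 1))
    rw [if_neg hm, if_pos hm'] at e1 e2
    simp only [hq2] at e1 e2
    split_ifs at e1 e2 <;> omega
  · have e1 := Hn (q ^ ((n:ℤ) - (i:ℤ) + 2*(k:ℤ) - 1))
    have e2 := Hn (q ^ ((n:ℤ) - (i:ℤ) + 2*(k':ℤ) - 1))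
    rw [if_neg hm, if_neg hm'] at e1 e2
    simp only [hq2] at e1 e2
    split_ifs at e1 e2 <;> omega

lemma aux_pm {n i r M k k' : ℕ} {q : ℂ} {S S' : Finset ℤ}
    (hq2 : ∀ a b : ℤ, q ^ a = q ^ b ↔ a = b)
    (hn : 4 ≤ n) (hrn : (r : ℤ) < (n : ℤ) - 1)
    (hiM : (i : ℤ) = (r : ℤ) + 2 * (M : ℤ)) (hk : k ≤ M) (hk' : k' ≤ M)
    (hSc : S.card = k) (hSb : ∀ x ∈ S, x ≤ (n : ℤ) - 1)
    (hSc' : S'.card = k') (hSb' : ∀ x ∈ S', x ≤ (n : ℤ) - 1)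
    (h : piD n i r q S + piDplus n i r k q = piD n i r q S' + piDminus n i r k' q) :
    k = M ∧ k' = M := by
  have Hn : ∀ b : ℂ,
      (if ((n : ℤ) - 1) ∈ S then
          (if b = q ^ ((n:ℤ) + (i:ℤ) - 2*(r:ℤ) - 2*(k:ℤ) - 1) then (1:ℤ) else 0) -
          (if b = q ^ ((n:ℤ) - (i:ℤ) + 2*(k:ℤ) - 1) then 1 else 0) else 0) +
        ((if b = q ^ ((n:ℤ) - (i:ℤ) + 2*(k:ℤ) - 1) then 1 else 0) -
         (if b = q ^ ((n:ℤ) + (i:ℤ) - 2*(r:ℤ) - 2*(k:ℤ) - 1) then 1 else 0)) =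
      (if ((n : ℤ) - 1) ∈ S' then
          (if b = q ^ ((n:ℤ) + (i:ℤ) - 2*(r:ℤ) - 2*(k':ℤ) - 1) then (1:ℤ) else 0) -
          (if b = q ^ ((n:ℤ) - (i:ℤ) + 2*(k':ℤ) - 1) then 1 else 0) else 0) := by
    intro b
    have hx := DFunLike.congr_fun h ((n : ℤ), b)
    rw [Finsupp.add_apply, Finsupp.add_apply, piD_apply_n hn hrn hSb,
      piD_apply_n hn hrn hSb', piDplus_apply_n (show 1 ≤ n by omega),
      piDminus_apply_ne (show (n:ℤ) ≠ (n:ℤ) - 1 by omega),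
      add_zero, hSc, hSc'] at hx
    exact hx
  have Hm : ∀ b : ℂ,
      (if ((n : ℤ) - 1) ∈ S then
          (if b = q ^ ((n:ℤ) + (i:ℤ) - 2*(r:ℤ) - 2*(k:ℤ) - 1) then (1:ℤ) else 0) -
          (if b = q ^ ((n:ℤ) - (i:ℤ) + 2*(k:ℤ) - 1) then 1 else 0) else 0) =
      (if ((n : ℤ) - 1) ∈ S' then
          (if b = q ^ ((n:ℤ) + (i:ℤ) - 2*(r:ℤ) - 2*(k':ℤ) - 1) then (1:ℤ) else 0) -
          (if b = q ^ ((n:ℤ) - (i:ℤ) + 2*(k':ℤ) - 1) then 1 else 0) else 0) +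
        ((if b = q ^ ((n:ℤ) - (i:ℤ) + 2*(k':ℤ) - 1) then 1 else 0) -
         (if b = q ^ ((n:ℤ) + (i:ℤ) - 2*(r:ℤ) - 2*(k':ℤ) - 1) then 1 else 0)) := by
    intro b
    have hx := DFunLike.congr_fun h ((n : ℤ) - 1, b)
    rw [Finsupp.add_apply, Finsupp.add_apply, piD_apply_nm1 hn hrn hSb,
      piD_apply_nm1 hn hrn hSb',
      piDplus_apply_ne (show (n:ℤ) - 1 ≠ (n:ℤ) by omega),
      piDminus_apply_nm1 (show 2 ≤ n by omega),
      add_zero, hSc, hSc'] at hx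
    exact hx
  by_cases hm : ((n : ℤ) - 1) ∈ S <;> by_cases hm' : ((n : ℤ) - 1) ∈ S'
  · have e1 := Hm (q ^ ((n:ℤ) + (i:ℤ) - 2*(r:ℤ) - 2*(k:ℤ) - 1))
    have e2 := Hn (q ^ ((n:ℤ) + (i:ℤ) - 2*(r:ℤ) - 2*(k':ℤ) - 1))
    rw [if_pos hm, if_pos hm'] at e1 e2
    simp only [hq2] at e1 e2
    split_ifs at e1 e2 <;> omega
  · have e1 := Hm (q ^ ((n:ℤ) + (i:ℤ) - 2*(r:ℤ) - 2*(k:ℤ) - 1))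
    have e2 := Hm (q ^ ((n:ℤ) - (i:ℤ) + 2*(k':ℤ) - 1))
    rw [if_pos hm, if_neg hm'] at e1 e2
    simp only [hq2] at e1 e2
    split_ifs at e1 e2 <;> omega
  · have e1 := Hn (q ^ ((n:ℤ) - (i:ℤ) + 2*(k:ℤ) - 1))
    have e2 := Hn (q ^ ((n:ℤ) + (i:ℤ) - 2*(r:ℤ) - 2*(k':ℤ) - 1))
    rw [if_neg hm, if_pos hm'] at e1 e2
    simp only [hq2] at e1 e2
    split_ifs at e1 e2 <;> omega
  · have e1 := Hn (q ^ ((n:ℤ) - (i:ℤ) + 2*(k:ℤ) - 1))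
    have e2 := Hm (q ^ ((n:ℤ) - (i:ℤ) + 2*(k':ℤ) - 1))
    rw [if_neg hm, if_neg hm'] at e1 e2
    simp only [hq2] at e1 e2
    split_ifs at e1 e2 <;> omega

/-- type D_n: for `𝐣 ∈ J_{k,r}` and `𝐣' ∈ J_{k',r}`:
(i) `π_r(𝐣,±) = π_r(𝐣',±)` iff `k = k'`; moreover if `k = M` then
`π_r(𝐣,+) = π_r(𝐣,-) = 1`.
(ii) If `π_r(𝐣)π_r(𝐣,+) = π_r(𝐣')π_r(𝐣',+)` or
`π_r(𝐣)π_r(𝐣,+) = π_r(𝐣')π_r(𝐣',-)`, then `k = k'`; moreover if `k = k' < M`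
then `π_r(𝐣)π_r(𝐣,+) ≠ π_r(𝐣')π_r(𝐣',-)` (additive notation). -/
theorem piDpm_facts (n i r M : ℕ) (q : ℂ) (hn : 4 ≤ n) (hq : q ≠ 0)
    (hroot : ∀ m : ℕ, m ≠ 0 → q ^ m ≠ 1) (hi : 1 < i) (hin : i ≤ n - 2)
    (hri : r ≤ i) (hpar : r % 2 = i % 2) (hM : M = (i - r) / 2)
    (k k' : ℕ) (hk : k ≤ M) (hk' : k' ≤ M)
    (S S' : Finset ℤ) (hS : memJD n r k S) (hS' : memJD n r k' S') :
    ((piDplus n i r k q = piDplus n i r k' q ↔ k = k') ∧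
     (piDminus n i r k q = piDminus n i r k' q ↔ k = k') ∧
     (k = M → piDplus n i r k q = 0 ∧ piDminus n i r k q = 0)) ∧
    ((piD n i r q S + piDplus n i r k q = piD n i r q S' + piDplus n i r k' q →
        k = k') ∧
     (piD n i r q S + piDplus n i r k q = piD n i r q S' + piDminus n i r k' q →
        k = k') ∧
     (k = k' → k < M →
        piD n i r q S + piDplus n i r k q ≠ piD n i r q S' + piDminus n i r k' q)) := by
  have hq2 := zpow_inj_of_not_root hq hroot
  have hiM : (i : ℤ) = (r : ℤ) + 2 * (M : ℤ) := by omega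
  have hrn : (r : ℤ) < (n : ℤ) - 1 := by omega
  obtain ⟨hSc, hSp⟩ := hS
  obtain ⟨hSc', hSp'⟩ := hS'
  have hSb : ∀ x ∈ S, x ≤ (n : ℤ) - 1 := fun x hx => (hSp x hx).2
  have hSb' : ∀ x ∈ S', x ≤ (n : ℤ) - 1 := fun x hx => (hSp' x hx).2
  refine ⟨⟨⟨?_, fun h => by rw [h]⟩, ⟨?_, fun h => by rw [h]⟩, ?_⟩, ?_, ?_, ?_⟩
  · intro h
    have e1 := DFunLike.congr_fun h ((n : ℤ), q ^ ((n:ℤ) - (i:ℤ) + 2*(k:ℤ) - 1))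
    have e2 := DFunLike.congr_fun h ((n : ℤ), q ^ ((n:ℤ) - (i:ℤ) + 2*(k':ℤ) - 1))
    rw [piDplus_apply_n (show 1 ≤ n by omega), piDplus_apply_n (show 1 ≤ n by omega)] at e1 e2
    simp only [hq2] at e1 e2
    split_ifs at e1 e2 <;> omega
  · intro h
    have e1 := DFunLike.congr_fun h ((n : ℤ) - 1, q ^ ((n:ℤ) - (i:ℤ) + 2*(k:ℤ) - 1))
    have e2 := DFunLike.congr_fun h ((n : ℤ) - 1, q ^ ((n:ℤ) - (i:ℤ) + 2*(k':ℤ) - 1))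
    rw [piDminus_apply_nm1 (show 2 ≤ n by omega), piDminus_apply_nm1 (show 2 ≤ n by omega)] at e1 e2
    simp only [hq2] at e1 e2
    split_ifs at e1 e2 <;> omega
  · intro hkM
    constructor
    · unfold piDplus
      rw [show (n:ℤ) - (i:ℤ) + 2*(k:ℤ) - 1 = (n:ℤ) + (i:ℤ) - 2*(r:ℤ) - 2*(k:ℤ) - 1 from by omega]
      exact sub_self _
    · unfold piDminus
      rw [show (n:ℤ) - (i:ℤ) + 2*(k:ℤ) - 1 = (n:ℤ) + (i:ℤ) - 2*(r:ℤ) - 2*(k:ℤ) - 1 from by omega]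
      exact sub_self _
  · exact fun h => aux_pp hq2 hn hrn hiM hk hk' hSc hSb hSc' hSb' h
  · intro h
    have := aux_pm hq2 hn hrn hiM hk hk' hSc hSb hSc' hSb' h
    omega
  · intro hkk hkM h
    have := aux_pm hq2 hn hrn hiM hk hk' hSc hSb hSc' hSb' h
    omega
end
end

section
/- Let 𝐧 be a strictly increasing partition and j ∈ supp(𝐧). Then the symmetric difference of supp(𝐧) with the integer interval [j, τ⁺_𝐧(j)] has the same cardinality as supp(𝐧), and likewise the symmetric difference of supp(𝐧) with the integer interval [j, τ⁻_𝐧(j)] has the same cardinality as supp(𝐧). -/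
/-- `σ⁺_S(j)`: the largest `j' ∈ S` with `j' ≥ j` such that `j'' - j < 2(ι(j'') - ι(j))`
for all `j'' ∈ S` with `j < j'' ≤ j'`. -/
def sigmaP (S : Finset ℤ) (j : ℤ) : ℤ :=
  WithBot.unbotD j (Finset.max (S.filter (fun j' => j ≤ j' ∧
    ∀ j'' ∈ S, j < j'' → j'' ≤ j' →
      j'' - j < 2 * ((iotaF S j'' : ℤ) - (iotaF S j : ℤ)))))

/-- `σ⁻_S(j)`: the smallest `j' ∈ S` with `j' ≤ j` such that `j - j'' < 2(ι(j) - ι(j''))`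
for all `j'' ∈ S` with `j' ≤ j'' < j`. -/
def sigmaM (S : Finset ℤ) (j : ℤ) : ℤ :=
  WithTop.untopD j (Finset.min (S.filter (fun j' => j' ≤ j ∧
    ∀ j'' ∈ S, j' ≤ j'' → j'' < j →
      j - j'' < 2 * ((iotaF S j : ℤ) - (iotaF S j'' : ℤ)))))

/-- `τ⁺_S(j) = j + 2(ι(σ⁺(j)) - ι(j)) + 1`. -/
def tauP (S : Finset ℤ) (j : ℤ) : ℤ :=
  j + 2 * ((iotaF S (sigmaP S j) : ℤ) - (iotaF S j : ℤ)) + 1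

/-- `τ⁻_S(j) = j + 2(ι(σ⁻(j)) - ι(j)) - 1`. -/
def tauM (S : Finset ℤ) (j : ℤ) : ℤ :=
  j + 2 * ((iotaF S (sigmaM S j) : ℤ) - (iotaF S j : ℤ)) - 1

/-- The set of integers between `a` and `b` inclusive, regardless of order. -/
noncomputable def itv (a b : ℤ) : Finset ℤ := Finset.Icc (min a b) (max a b)

/-- The symmetric difference `(S \ T) ∪ (T \ S)`. -/
def symmd (S T : Finset ℤ) : Finset ℤ := (S \ T) ∪ (T \ S)

/-!
The points of `S` in `[j, σ⁺(j)]` are the `ι(σ⁺) - ι(j) + 1` consecutive elements from `j`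
to `σ⁺(j)`, and the maximality of `σ⁺(j)` leaves no point of `S` in `(σ⁺(j), τ⁺(j)]`: such a
point would itself satisfy the defining condition, since every `j''` beyond `σ⁺(j)` has
`ι(j'') > ι(σ⁺(j))`. Hence `S` covers exactly half of the interval `[j, τ⁺(j)]`, which has
`2(ι(σ⁺) - ι(j) + 1)` points, and taking the symmetric difference with a set half of which lies
in `S` does not change the cardinality of `S`. The case of `τ⁻` is the mirror image.
-/

open Finset

theorem card_symmd_of_card_eq_two_mul_card_inter {S T : Finset ℤ}
    (h : #T = 2 * #(S ∩ T)) : #(symmd S T) = #S := by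
  have hS := card_sdiff_add_card_inter S T
  have hT := card_sdiff_add_card_inter T S
  rw [inter_comm] at hT
  rw [symmd, card_union_of_disjoint disjoint_sdiff_sdiff]
  omega

section Position

variable (S : Finset ℤ)

theorem iotaF_mono : Monotone (iotaF S) :=
  fun _ _ hab => card_le_card <| monotone_filter_right S fun _ _ hx => hx.trans hab

theorem iotaF_sub_one_add_one {a : ℤ} (ha : a ∈ S) : iotaF S (a - 1) + 1 = iotaF S a := by
  have hsplit : S.filter (· ≤ a) = insert a (S.filter (· ≤ a - 1)) := by
    ext x
    simp only [mem_insert, mem_filter]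
    grind
  rw [iotaF, iotaF, hsplit, card_insert_of_notMem (by simp)]

theorem iotaF_lt_iotaF {a b : ℤ} (ha : a ∈ S) (hba : b < a) : iotaF S b < iotaF S a := by
  have := iotaF_mono S (show b ≤ a - 1 by omega)
  have := iotaF_sub_one_add_one S ha
  omega

theorem card_inter_Icc_add_iotaF {a b : ℤ} (hab : a ≤ b) :
    #(S ∩ Icc a b) + iotaF S (a - 1) = iotaF S b := by
  rw [iotaF, iotaF, ← card_union_of_disjoint]
  · congr 1
    ext x
    simp only [mem_union, mem_inter, mem_Icc, mem_filter]
    grind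
  · rw [disjoint_left]
    simp only [mem_inter, mem_Icc, mem_filter]
    grind

end Position

section Plus

variable {S : Finset ℤ} {j : ℤ}

theorem sigmaP_isGreatest (hj : j ∈ S) :
    IsGreatest {x | x ∈ S ∧ j ≤ x ∧ ∀ j'' ∈ S, j < j'' → j'' ≤ x →
      j'' - j < 2 * ((iotaF S j'' : ℤ) - iotaF S j)} (sigmaP S j) := by
  set F := S.filter fun x => j ≤ x ∧ ∀ j'' ∈ S, j < j'' → j'' ≤ x →
      j'' - j < 2 * ((iotaF S j'' : ℤ) - iotaF S j)
  have hF : F.Nonempty := ⟨j, mem_filter.mpr ⟨hj, le_rfl, fun _ _ h h' => absurd h' h.not_ge⟩⟩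
  rw [sigmaP, ← coe_max' hF, WithBot.unbotD_coe]
  simpa [F] using F.isGreatest_max' hF

theorem notMem_of_sigmaP_lt_of_le_tauP (hj : j ∈ S) {x : ℤ} (hσx : sigmaP S j < x)
    (hxτ : x ≤ tauP S j) : x ∉ S := by
  obtain ⟨⟨-, hjσ, hσrun⟩, hσmax⟩ := sigmaP_isGreatest hj
  intro hx
  refine hσx.not_ge (hσmax ⟨hx, hjσ.trans hσx.le, fun j'' hj'' hjj'' hj''x => ?_⟩)
  rcases le_or_gt j'' (sigmaP S j) with hj''σ | hσj''
  · exact hσrun j'' hj'' hjj'' hj''σ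
  · have := iotaF_lt_iotaF S hj'' hσj''
    unfold tauP at hxτ
    omega

theorem card_itv_tauP (hj : j ∈ S) :
    #(itv j (tauP S j)) = 2 * #(S ∩ itv j (tauP S j)) := by
  obtain ⟨⟨hσ, hjσ, hσrun⟩, -⟩ := sigmaP_isGreatest hj
  have hιjσ := iotaF_mono S hjσ
  have hστ : sigmaP S j ≤ tauP S j := by
    rcases hjσ.eq_or_lt with hjσ | hjσ
    · unfold tauP; omega
    · have := hσrun _ hσ hjσ le_rfl
      unfold tauP; omega
  have hitv : itv j (tauP S j) = Icc j (tauP S j) := by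
    rw [itv, min_eq_left (by unfold tauP; omega), max_eq_right (by unfold tauP; omega)]
  have hinter : S ∩ Icc j (tauP S j) = S ∩ Icc j (sigmaP S j) := by
    ext x
    simp only [mem_inter, mem_Icc]
    refine ⟨fun ⟨hx, hjx, hxτ⟩ => ⟨hx, hjx, ?_⟩, fun ⟨hx, hjx, hxσ⟩ => ⟨hx, hjx, hxσ.trans hστ⟩⟩
    by_contra! hσx
    exact notMem_of_sigmaP_lt_of_le_tauP hj hσx hxτ hx
  have hcount := card_inter_Icc_add_iotaF S hjσ
  have hιj := iotaF_sub_one_add_one S hj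
  rw [hitv, hinter, Int.card_Icc]
  unfold tauP
  omega

end Plus

section Minus

variable {S : Finset ℤ} {j : ℤ}

theorem sigmaM_isLeast (hj : j ∈ S) :
    IsLeast {x | x ∈ S ∧ x ≤ j ∧ ∀ j'' ∈ S, x ≤ j'' → j'' < j →
      j - j'' < 2 * ((iotaF S j : ℤ) - iotaF S j'')} (sigmaM S j) := by
  set F := S.filter fun x => x ≤ j ∧ ∀ j'' ∈ S, x ≤ j'' → j'' < j →
      j - j'' < 2 * ((iotaF S j : ℤ) - iotaF S j'')
  have hF : F.Nonempty := ⟨j, mem_filter.mpr ⟨hj, le_rfl, fun _ _ h h' => absurd h h'.not_ge⟩⟩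
  rw [sigmaM, ← coe_min' hF, WithTop.untopD_coe]
  simpa [F] using F.isLeast_min' hF

theorem notMem_of_tauM_le_of_lt_sigmaM (hj : j ∈ S) {x : ℤ} (hτx : tauM S j ≤ x)
    (hxσ : x < sigmaM S j) : x ∉ S := by
  obtain ⟨⟨hσ, hσj, hσrun⟩, hσmin⟩ := sigmaM_isLeast hj
  intro hx
  refine hxσ.not_ge (hσmin ⟨hx, hxσ.le.trans hσj, fun j'' hj'' hxj'' hj''j => ?_⟩)
  rcases le_or_gt (sigmaM S j) j'' with hσj'' | hj''σ
  · exact hσrun j'' hj'' hσj'' hj''j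
  · have := iotaF_lt_iotaF S hσ hj''σ
    unfold tauM at hτx
    omega

theorem card_itv_tauM (hj : j ∈ S) :
    #(itv j (tauM S j)) = 2 * #(S ∩ itv j (tauM S j)) := by
  obtain ⟨⟨hσ, hσj, hσrun⟩, -⟩ := sigmaM_isLeast hj
  have hισj := iotaF_mono S hσj
  have hτσ : tauM S j ≤ sigmaM S j := by
    rcases hσj.eq_or_lt with hσj | hσj
    · unfold tauM; omega
    · have := hσrun _ hσ le_rfl hσj
      unfold tauM; omega
  have hitv : itv j (tauM S j) = Icc (tauM S j) j := by
    rw [itv, min_eq_right (by unfold tauM; omega), max_eq_left (by unfold tauM; omega)]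
  have hinter : S ∩ Icc (tauM S j) j = S ∩ Icc (sigmaM S j) j := by
    ext x
    simp only [mem_inter, mem_Icc]
    refine ⟨fun ⟨hx, hτx, hxj⟩ => ⟨hx, ?_, hxj⟩, fun ⟨hx, hσx, hxj⟩ => ⟨hx, hτσ.trans hσx, hxj⟩⟩
    by_contra! hxσ
    exact notMem_of_tauM_le_of_lt_sigmaM hj hτx hxσ hx
  have hcount := card_inter_Icc_add_iotaF S hσj
  have hισ := iotaF_sub_one_add_one S hσ
  rw [hitv, hinter, Int.card_Icc]
  unfold tauM
  omega

end Minus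

/-- For a strictly increasing partition `𝐧` (with support `S`) and
`j ∈ S`, the symmetric difference of `S` with the integer interval `[j, τ⁺(j)]`
has the same cardinality as `S`, and likewise for `[j, τ⁻(j)]`. -/
theorem card_symmd_interval (S : Finset ℤ) (j : ℤ) (hj : j ∈ S) :
    (symmd S (itv j (tauP S j))).card = S.card ∧
    (symmd S (itv j (tauM S j))).card = S.card :=
  ⟨card_symmd_of_card_eq_two_mul_card_inter (card_itv_tauP hj),
    card_symmd_of_card_eq_two_mul_card_inter (card_itv_tauM hj)⟩
end

section
/- Let m > 1 be an integer, 𝐧 a strictly increasing partition, and j ∈ supp_m(𝐧). Then, for each choice of sign ±: τ^±_𝐧(j) ∈ supp_{m±1}(𝐧^±(j)); supp_{m±1}(𝐧^±(j)) is the disjoint union of supp_{m±1}(𝐧) and {τ^±_𝐧(j)}; supp_m(𝐧^±(j)) = supp_m(𝐧) \ {j}; and τ^∓ computed in the partition 𝐧^±(j) satisfies τ^∓_{𝐧^±(j)}(τ^±_𝐧(j)) = j. -/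
/-- `supp_m(S) = { j ∈ S : 2 ι_S(j) = j - m }`. -/
def suppm (m : ℤ) (S : Finset ℤ) : Finset ℤ :=
  S.filter (fun j => 2 * (iotaF S j : ℤ) = j - m)

/-- `𝐧⁺(j) = 𝐧_{[j, τ⁺(j)]}`. -/
noncomputable def opP (S : Finset ℤ) (j : ℤ) : Finset ℤ := symmd S (itv j (tauP S j))

/-- `𝐧⁻(j) = 𝐧_{[j, τ⁻(j)]}`. -/
noncomputable def opM (S : Finset ℤ) (j : ℤ) : Finset ℤ := symmd S (itv j (tauM S j))

/-!
Write `d(x) = x - 2 ι(x)` (`defect`). It is a ±1 walk on `ℤ` that steps down exactly at the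
points of `𝐧`, and `supp_m(𝐧)` is the set of down-steps of `d` arriving at level `m`. The
conditions defining `σ^±` read `d(j'') < d(j)` and `d(j) < d(j'')`, and from this one finds that
for `j ∈ supp_m(𝐧)` the segment `[j, τ⁺(j)]` is the excursion of `d` below level `m + 1` that
starts at `j`, while `[τ⁻(j), j]` is the excursion of `d` above level `m` that ends at `j`.

Flipping membership on an interval `[a, b]` with `d(a - 1) = d(b)` reflects the walk on `[a, b]`
in the level `d(a - 1)` and leaves it unchanged elsewhere, so it exchanges excursions below and
above that level. Every claim is read off from this reflection; for the sign `-` one applies the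
facts about lower excursions to `𝐧⁻(j)`, whose flip on the same interval is `𝐧` again.
-/

section

open Finset
open scoped symmDiff

def defect (S : Finset ℤ) (x : ℤ) : ℤ := x - 2 * (iotaF S x : ℤ)

theorem iotaF_congr {S T : Finset ℤ} {x : ℤ} (h : ∀ y ≤ x, y ∈ T ↔ y ∈ S) :
    iotaF T x = iotaF S x := by
  unfold iotaF
  congr 1
  ext y
  simp only [mem_filter]
  have := h y
  tauto

theorem iotaF_succ (S : Finset ℤ) (x : ℤ) :
    iotaF S (x + 1) = iotaF S x + if x + 1 ∈ S then 1 else 0 := by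
  unfold iotaF
  rw [filter_congr (q := fun y => y ≤ x ∨ y = x + 1) fun _ _ => by omega, filter_or,
    card_union_of_disjoint (disjoint_filter.2 fun _ _ _ => by omega), filter_eq']
  split_ifs <;> simp

theorem iotaF_eq_of_disjoint_Ioc {S : Finset ℤ} {p q : ℤ} (hpq : p ≤ q)
    (h : Disjoint S (Ioc p q)) : iotaF S q = iotaF S p := by
  unfold iotaF
  congr 1
  ext y
  simp only [mem_filter]
  refine and_congr_right fun hy => ⟨fun hyq => ?_, fun hyp => by omega⟩
  by_contra hyp
  exact disjoint_left.1 h hy (mem_Ioc.2 ⟨by omega, hyq⟩)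

theorem defect_succ (S : Finset ℤ) (x : ℤ) :
    defect S (x + 1) = defect S x + if x + 1 ∈ S then -1 else 1 := by
  unfold defect
  rw [iotaF_succ]
  split_ifs <;> push_cast <;> ring

theorem defect_succ_le (S : Finset ℤ) (x : ℤ) : defect S (x + 1) ≤ defect S x + 1 := by
  rw [defect_succ]
  split_ifs <;> omega

theorem defect_of_mem {S : Finset ℤ} {x : ℤ} (h : x ∈ S) : defect S x = defect S (x - 1) - 1 := by
  simpa [h, sub_eq_add_neg] using defect_succ S (x - 1)

theorem defect_of_notMem {S : Finset ℤ} {x : ℤ} (h : x ∉ S) :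
    defect S x = defect S (x - 1) + 1 := by
  simpa [h] using defect_succ S (x - 1)

theorem defect_le_self (S : Finset ℤ) (x : ℤ) : defect S x ≤ x := by
  unfold defect
  omega

theorem sub_two_mul_card_le_defect (S : Finset ℤ) (x : ℤ) : x - 2 * #S ≤ defect S x := by
  have : iotaF S x ≤ #S := card_filter_le _ _
  unfold defect
  omega

theorem defect_eq_of_disjoint_Ioc {S : Finset ℤ} {p q : ℤ} (hpq : p ≤ q)
    (h : Disjoint S (Ioc p q)) : defect S q = defect S p + (q - p) := by
  unfold defect
  rw [iotaF_eq_of_disjoint_Ioc hpq h]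
  ring

theorem sub_lt_two_mul_iotaF_sub_iff (S : Finset ℤ) (u v : ℤ) :
    u - v < 2 * ((iotaF S u : ℤ) - iotaF S v) ↔ defect S u < defect S v := by
  unfold defect
  omega

theorem mem_suppm {m : ℤ} {S : Finset ℤ} {x : ℤ} : x ∈ suppm m S ↔ x ∈ S ∧ defect S x = m := by
  unfold suppm defect
  exact mem_filter.trans (and_congr_right fun _ => by omega)

theorem exists_mem_Ioc_sub_one_le_defect {S : Finset ℤ} {b y : ℤ} (hy : y ∈ S) (hby : b < y) :
    ∃ z ∈ S, z ∈ Ioc b y ∧ defect S b - 1 ≤ defect S z := by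
  obtain ⟨z, ⟨hz, hbz, hzy⟩, hleast⟩ := Int.exists_least_of_bdd
    (P := fun z => z ∈ S ∧ b < z ∧ z ≤ y) ⟨b, fun _ h => h.2.1.le⟩ ⟨y, hy, hby, le_rfl⟩
  have hgap : Disjoint S (Ioc b (z - 1)) := disjoint_left.2 fun x hx hxI => by
    rw [mem_Ioc] at hxI
    exact absurd (hleast x ⟨hx, hxI.1, by omega⟩) (by omega)
  refine ⟨z, hz, mem_Ioc.2 ⟨hbz, hzy⟩, ?_⟩
  rw [defect_of_mem hz, defect_eq_of_disjoint_Ioc (by omega) hgap]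
  omega

theorem exists_mem_Ico_defect_le_sub_one {S : Finset ℤ} {a y : ℤ} (ha : a ∉ S) (hy : y ∈ S)
    (hya : y < a) : ∃ z ∈ S, z ∈ Ico y a ∧ defect S z ≤ defect S a - 1 := by
  obtain ⟨z, ⟨hz, hyz, hza⟩, hgreatest⟩ := Int.exists_greatest_of_bdd
    (P := fun z => z ∈ S ∧ y ≤ z ∧ z < a) ⟨a, fun _ h => h.2.2.le⟩ ⟨y, hy, le_rfl, hya⟩
  have hgap : Disjoint S (Ioc z a) := disjoint_left.2 fun x hx hxI => by
    rw [mem_Ioc] at hxI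
    rcases hxI.2.lt_or_eq with hxa | rfl
    · exact absurd (hgreatest x ⟨hx, by omega, hxa⟩) (by omega)
    · exact ha hx
  refine ⟨z, hz, mem_Ico.2 ⟨hyz, hza⟩, ?_⟩
  rw [defect_eq_of_disjoint_Ioc hza.le hgap]
  omega

theorem symmd_eq_symmDiff (S T : Finset ℤ) : symmd S T = S ∆ T := rfl

theorem itv_of_le {a b : ℤ} (h : a ≤ b) : itv a b = Icc a b := by
  rw [itv, min_eq_left h, max_eq_right h]

theorem itv_of_ge {a b : ℤ} (h : b ≤ a) : itv a b = Icc b a := by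
  rw [itv, min_eq_right h, max_eq_left h]

theorem mem_symmDiff_Icc_of_notMem {S : Finset ℤ} {a b x : ℤ} (h : x < a ∨ b < x) :
    x ∈ S ∆ Icc a b ↔ x ∈ S := by
  have : ¬(a ≤ x ∧ x ≤ b) := by omega
  rw [mem_symmDiff, mem_Icc]
  tauto

theorem mem_symmDiff_Icc_of_mem {S : Finset ℤ} {a b x : ℤ} (hax : a ≤ x) (hxb : x ≤ b) :
    x ∈ S ∆ Icc a b ↔ x ∉ S := by
  rw [mem_symmDiff, mem_Icc]
  tauto

theorem defect_sub_defect_eq {S T : Finset ℤ} {p q : ℤ} (hpq : p ≤ q)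
    (h : ∀ x, p < x → x ≤ q → (x ∈ T ↔ x ∈ S)) :
    defect T q - defect S q = defect T p - defect S p := by
  induction q, hpq using Int.leInduction with
  | base => rfl
  | succ q hpq ih =>
    rw [defect_succ, defect_succ, ← ih fun x hpx hxq => h x hpx (by omega),
      if_congr (h (q + 1) (by omega) le_rfl) rfl rfl]
    ring

theorem defect_add_defect_eq {S T : Finset ℤ} {p q : ℤ} (hpq : p ≤ q)
    (h : ∀ x, p < x → x ≤ q → (x ∈ T ↔ x ∉ S)) :
    defect T q + defect S q = defect T p + defect S p := by
  induction q, hpq using Int.leInduction with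
  | base => rfl
  | succ q hpq ih =>
    rw [defect_succ, defect_succ, ← ih fun x hpx hxq => h x hpx (by omega),
      if_congr (h (q + 1) (by omega) le_rfl) rfl rfl]
    split_ifs <;> ring

theorem defect_symmDiff_Icc_of_lt {S : Finset ℤ} {a b x : ℤ} (hx : x < a) :
    defect (S ∆ Icc a b) x = defect S x := by
  unfold defect
  rw [iotaF_congr fun y hy => mem_symmDiff_Icc_of_notMem (by omega)]

theorem defect_symmDiff_Icc_of_mem {S : Finset ℤ} {a b x : ℤ} (hax : a ≤ x) (hxb : x ≤ b) :
    defect (S ∆ Icc a b) x = 2 * defect S (a - 1) - defect S x := by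
  have := defect_add_defect_eq (S := S) (T := S ∆ Icc a b) (p := a - 1) (q := x) (by omega)
    fun y hay hyx => mem_symmDiff_Icc_of_mem (by omega) (by omega)
  rw [defect_symmDiff_Icc_of_lt (b := b) (sub_one_lt a)] at this
  omega

theorem defect_symmDiff_Icc_of_gt {S : Finset ℤ} {a b x : ℤ} (hab : a ≤ b)
    (hbal : defect S b = defect S (a - 1)) (hx : b < x) :
    defect (S ∆ Icc a b) x = defect S x := by
  have := defect_sub_defect_eq (S := S) (T := S ∆ Icc a b) (p := b) (q := x) hx.le
    fun y hby hyx => mem_symmDiff_Icc_of_notMem (by omega)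
  rw [defect_symmDiff_Icc_of_mem hab le_rfl] at this
  omega

theorem mem_suppm_symmDiff_Icc_of_notMem {S : Finset ℤ} {k a b x : ℤ} (hab : a ≤ b)
    (hbal : defect S b = defect S (a - 1)) (hx : x < a ∨ b < x) :
    x ∈ suppm k (S ∆ Icc a b) ↔ x ∈ suppm k S := by
  rw [mem_suppm, mem_suppm, mem_symmDiff_Icc_of_notMem hx]
  rcases hx with hx | hx
  · rw [defect_symmDiff_Icc_of_lt hx]
  · rw [defect_symmDiff_Icc_of_gt hab hbal hx]

theorem Int.exists_first_eq_of_lt_of_le {f : ℤ → ℤ} (hf : ∀ x, f (x + 1) ≤ f x + 1) {a b L : ℤ}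
    (hab : a ≤ b) (ha : f a < L) (hb : L ≤ f b) :
    ∃ t, a < t ∧ f t = L ∧ ∀ x, a ≤ x → x < t → f x < L := by
  obtain ⟨t, ⟨hat, ht⟩, hleast⟩ := Int.exists_least_of_bdd (P := fun t => a ≤ t ∧ L ≤ f t)
    ⟨a, fun _ h => h.1⟩ ⟨b, hab, hb⟩
  have hbefore : ∀ x, a ≤ x → x < t → f x < L := fun x hax hxt => by
    by_contra hx
    exact absurd (hleast x ⟨hax, by omega⟩) (by omega)
  have hat' : a < t := lt_of_le_of_ne hat fun h => by subst h; omega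
  have := hf (t - 1)
  rw [sub_add_cancel] at this
  exact ⟨t, hat', le_antisymm (by linarith [hbefore (t - 1) (by omega) (by omega)]) ht, hbefore⟩

theorem Int.exists_last_eq_of_le_of_lt {f : ℤ → ℤ} (hf : ∀ x, f (x + 1) ≤ f x + 1) {a b L : ℤ}
    (hab : a ≤ b) (ha : f a ≤ L) (hb : L < f b) :
    ∃ s, s < b ∧ f s = L ∧ ∀ x, s < x → x ≤ b → L < f x := by
  obtain ⟨s, ⟨hsb, hs⟩, hgreatest⟩ := Int.exists_greatest_of_bdd (P := fun s => s ≤ b ∧ f s ≤ L)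
    ⟨b, fun _ h => h.1⟩ ⟨a, hab, ha⟩
  have hafter : ∀ x, s < x → x ≤ b → L < f x := fun x hsx hxb => by
    by_contra hx
    exact absurd (hgreatest x ⟨hxb, by omega⟩) (by omega)
  have hsb' : s < b := lt_of_le_of_ne hsb fun h => by subst h; omega
  have := hf s
  exact ⟨s, hsb', le_antisymm hs (by linarith [hafter (s + 1) (by omega) (by omega)]), hafter⟩

structure IsLowerExcursion (S : Finset ℤ) (L a b : ℤ) : Prop where
  lt : a < b
  defect_pred : defect S (a - 1) = L
  defect_right : defect S b = L
  defect_lt : ∀ x, a ≤ x → x < b → defect S x < L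

structure IsUpperExcursion (S : Finset ℤ) (L a b : ℤ) : Prop where
  lt : a < b
  defect_pred : defect S (a - 1) = L
  defect_right : defect S b = L
  lt_defect : ∀ x, a ≤ x → x < b → L < defect S x

theorem exists_isLowerExcursion {S : Finset ℤ} {j : ℤ} (hj : j ∈ S) :
    ∃ t, IsLowerExcursion S (defect S j + 1) j t := by
  obtain ⟨t, hjt, ht, hbefore⟩ := Int.exists_first_eq_of_lt_of_le (defect_succ_le S)
    (le_max_left j (defect S j + 1 + 2 * #S)) (lt_add_one (defect S j))
    (by have := sub_two_mul_card_le_defect S (max j (defect S j + 1 + 2 * #S))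
        have := le_max_right j (defect S j + 1 + 2 * #S)
        omega)
  exact ⟨t, hjt, by rw [defect_of_mem hj]; ring, ht, hbefore⟩

theorem exists_isUpperExcursion {S : Finset ℤ} {j : ℤ} (hj : j ∈ S) :
    ∃ t, IsUpperExcursion S (defect S j) t j := by
  obtain ⟨s, hsj, hs, hafter⟩ := Int.exists_last_eq_of_le_of_lt (defect_succ_le S)
    (min_le_right (defect S j) (j - 1))
    ((defect_le_self S _).trans (min_le_left _ _)) (by rw [defect_of_mem hj]; omega)
  exact ⟨s + 1, by omega, by rwa [add_sub_cancel_right], rfl,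
    fun x hsx hxj => hafter x (by omega) (by omega)⟩

namespace IsLowerExcursion

variable {S : Finset ℤ} {L a b : ℤ}

theorem mem_left (e : IsLowerExcursion S L a b) : a ∈ S := by
  by_contra ha
  have := e.defect_lt a le_rfl e.lt
  rw [defect_of_notMem ha, e.defect_pred] at this
  omega

theorem notMem_right (e : IsLowerExcursion S L a b) : b ∉ S := by
  intro hb
  have := e.defect_lt (b - 1) (by have := e.lt; omega) (sub_one_lt b)
  have := e.defect_right
  rw [defect_of_mem hb] at this
  omega

theorem defect_left (e : IsLowerExcursion S L a b) : defect S a = L - 1 := by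
  rw [defect_of_mem e.mem_left, e.defect_pred]

theorem left_mem_suppm (e : IsLowerExcursion S L a b) : a ∈ suppm (L - 1) S :=
  mem_suppm.2 ⟨e.mem_left, e.defect_left⟩

theorem right_notMem_suppm (e : IsLowerExcursion S L a b) {k : ℤ} : b ∉ suppm k S :=
  fun h => e.notMem_right (mem_suppm.1 h).1

theorem defect_right_eq_defect_pred (e : IsLowerExcursion S L a b) :
    defect S b = defect S (a - 1) := by
  rw [e.defect_right, e.defect_pred]

theorem symmDiff (e : IsLowerExcursion S L a b) : IsUpperExcursion (S ∆ Icc a b) L a b where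
  lt := e.lt
  defect_pred := by rw [defect_symmDiff_Icc_of_lt (sub_one_lt a), e.defect_pred]
  defect_right := by
    rw [defect_symmDiff_Icc_of_mem e.lt.le le_rfl, e.defect_pred, e.defect_right]
    ring
  lt_defect x hax hxb := by
    rw [defect_symmDiff_Icc_of_mem hax hxb.le, e.defect_pred]
    linarith [e.defect_lt x hax hxb]

theorem isGreatest_sigmaP (e : IsLowerExcursion S L a b) :
    IsGreatest ↑(S.filter fun y => a ≤ y ∧ y < b) (sigmaP S a) := by
  have hF : S.filter (fun j' => a ≤ j' ∧ ∀ j'' ∈ S, a < j'' → j'' ≤ j' →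
      j'' - a < 2 * ((iotaF S j'' : ℤ) - (iotaF S a : ℤ))) =
      S.filter fun y => a ≤ y ∧ y < b := by
    refine filter_congr fun y hy => and_congr_right fun hay => ?_
    simp only [sub_lt_two_mul_iotaF_sub_iff, e.defect_left]
    constructor
    · intro h
      by_contra hyb
      have hby : b < y := lt_of_le_of_ne (not_lt.1 hyb) fun h => e.notMem_right (h ▸ hy)
      obtain ⟨z, hz, hzI, hdz⟩ := exists_mem_Ioc_sub_one_le_defect hy hby
      rw [mem_Ioc] at hzI
      have := h z hz (by have := e.lt; omega) hzI.2
      rw [e.defect_right] at hdz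
      omega
    · intro hyb z hz haz hzy
      rw [defect_of_mem hz]
      have := e.defect_lt (z - 1) (by omega) (by omega)
      omega
  have hne : (S.filter fun y => a ≤ y ∧ y < b).Nonempty :=
    ⟨a, mem_filter.2 ⟨e.mem_left, le_rfl, e.lt⟩⟩
  rw [sigmaP, hF, ← coe_max' hne, WithBot.unbotD_coe]
  exact isGreatest_max' _ hne

theorem tauP_eq (e : IsLowerExcursion S L a b) : tauP S a = b := by
  obtain ⟨hσ, hσmax⟩ := e.isGreatest_sigmaP
  rw [mem_coe, mem_filter] at hσ
  have hι : iotaF S b = iotaF S (sigmaP S a) :=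
    iotaF_eq_of_disjoint_Ioc hσ.2.2.le <| disjoint_left.2 fun y hy hyI => by
      rw [mem_Ioc] at hyI
      have hyb : y < b := lt_of_le_of_ne hyI.2 fun h => e.notMem_right (h ▸ hy)
      have := hσmax (mem_filter.2 ⟨hy, by omega, hyb⟩)
      omega
  have := e.defect_left
  have := e.defect_right
  unfold tauP
  unfold defect at *
  rw [← hι]
  omega

theorem opP_eq (e : IsLowerExcursion S L a b) : opP S a = S ∆ Icc a b := by
  rw [opP, e.tauP_eq, itv_of_le e.lt.le, symmd_eq_symmDiff]

theorem suppm_symmDiff (e : IsLowerExcursion S L a b) :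
    suppm L (S ∆ Icc a b) = insert b (suppm L S) := by
  have hab := e.lt
  ext x
  by_cases hx : x < a ∨ b < x
  · rw [mem_suppm_symmDiff_Icc_of_notMem hab.le e.defect_right_eq_defect_pred hx, mem_insert,
      or_iff_right (by omega)]
  obtain ⟨hax, hxb⟩ : a ≤ x ∧ x ≤ b := by omega
  rw [mem_insert, mem_suppm, mem_suppm, mem_symmDiff_Icc_of_mem hax hxb,
    defect_symmDiff_Icc_of_mem hax hxb, e.defect_pred]
  rcases hxb.lt_or_eq with hxb | rfl
  · have := e.defect_lt x hax hxb
    constructor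
    · rintro ⟨_, h⟩
      omega
    · rintro (rfl | ⟨_, h⟩) <;> omega
  · exact iff_of_true ⟨e.notMem_right, by rw [e.defect_right]; ring⟩ (Or.inl rfl)

theorem suppm_sub_one_symmDiff (e : IsLowerExcursion S L a b) :
    suppm (L - 1) (S ∆ Icc a b) = (suppm (L - 1) S).erase a := by
  have hab := e.lt
  ext x
  by_cases hx : x < a ∨ b < x
  · rw [mem_suppm_symmDiff_Icc_of_notMem hab.le e.defect_right_eq_defect_pred hx, mem_erase,
      and_iff_right (by omega)]
  obtain ⟨hax, hxb⟩ : a ≤ x ∧ x ≤ b := by omega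
  rw [mem_erase, mem_suppm, mem_suppm, mem_symmDiff_Icc_of_mem hax hxb,
    defect_symmDiff_Icc_of_mem hax hxb, e.defect_pred]
  have hdx : defect S x ≤ L := by
    rcases hxb.lt_or_eq with hxb | rfl
    · exact (e.defect_lt x hax hxb).le
    · exact e.defect_right.le
  refine ⟨fun ⟨_, h⟩ => by omega, fun ⟨hxa, hxS, h⟩ => ?_⟩
  have := e.defect_lt (x - 1) (by omega) (by omega)
  rw [defect_of_mem hxS] at h
  omega

end IsLowerExcursion

namespace IsUpperExcursion

variable {S : Finset ℤ} {L a b : ℤ}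

theorem notMem_left (e : IsUpperExcursion S L a b) : a ∉ S := by
  intro ha
  have := e.lt_defect a le_rfl e.lt
  rw [defect_of_mem ha, e.defect_pred] at this
  omega

theorem mem_right (e : IsUpperExcursion S L a b) : b ∈ S := by
  by_contra hb
  have := e.lt_defect (b - 1) (by have := e.lt; omega) (sub_one_lt b)
  have := e.defect_right
  rw [defect_of_notMem hb] at this
  omega

theorem defect_left (e : IsUpperExcursion S L a b) : defect S a = L + 1 := by
  rw [defect_of_notMem e.notMem_left, e.defect_pred]

theorem symmDiff (e : IsUpperExcursion S L a b) : IsLowerExcursion (S ∆ Icc a b) L a b where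
  lt := e.lt
  defect_pred := by rw [defect_symmDiff_Icc_of_lt (sub_one_lt a), e.defect_pred]
  defect_right := by
    rw [defect_symmDiff_Icc_of_mem e.lt.le le_rfl, e.defect_pred, e.defect_right]
    ring
  defect_lt x hax hxb := by
    rw [defect_symmDiff_Icc_of_mem hax hxb.le, e.defect_pred]
    linarith [e.lt_defect x hax hxb]

theorem isLeast_sigmaM (e : IsUpperExcursion S L a b) :
    IsLeast ↑(S.filter fun y => a < y ∧ y ≤ b) (sigmaM S b) := by
  have hF : S.filter (fun j' => j' ≤ b ∧ ∀ j'' ∈ S, j' ≤ j'' → j'' < b →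
      b - j'' < 2 * ((iotaF S b : ℤ) - (iotaF S j'' : ℤ))) =
      S.filter fun y => a < y ∧ y ≤ b := by
    refine filter_congr fun y hy => ?_
    simp only [sub_lt_two_mul_iotaF_sub_iff, e.defect_right]
    constructor
    · rintro ⟨hyb, h⟩
      refine ⟨?_, hyb⟩
      by_contra hay
      have hya : y < a := lt_of_le_of_ne (not_lt.1 hay) fun h => e.notMem_left (h ▸ hy)
      obtain ⟨z, hz, hzI, hdz⟩ := exists_mem_Ico_defect_le_sub_one e.notMem_left hy hya
      rw [mem_Ico] at hzI
      have := h z hz hzI.1 (by have := e.lt; omega)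
      rw [e.defect_left] at hdz
      omega
    · rintro ⟨hay, hyb⟩
      exact ⟨hyb, fun z _ hyz hzb => e.lt_defect z (by omega) hzb⟩
  have hne : (S.filter fun y => a < y ∧ y ≤ b).Nonempty :=
    ⟨b, mem_filter.2 ⟨e.mem_right, e.lt, le_rfl⟩⟩
  rw [sigmaM, hF, ← coe_min' hne, WithTop.untopD_coe]
  exact isLeast_min' _ hne

theorem tauM_eq (e : IsUpperExcursion S L a b) : tauM S b = a := by
  obtain ⟨hσ, hσmin⟩ := e.isLeast_sigmaM
  rw [mem_coe, mem_filter] at hσ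
  have hι : iotaF S (sigmaM S b - 1) = iotaF S a :=
    iotaF_eq_of_disjoint_Ioc (by omega) <| disjoint_left.2 fun y hy hyI => by
      rw [mem_Ioc] at hyI
      have := hσmin (mem_filter.2 ⟨hy, hyI.1, by omega⟩)
      omega
  have hσ' := iotaF_succ S (sigmaM S b - 1)
  rw [sub_add_cancel, if_pos hσ.1, hι] at hσ'
  have := e.defect_left
  have := e.defect_right
  unfold tauM
  unfold defect at *
  rw [hσ']
  push_cast
  omega

theorem opM_eq (e : IsUpperExcursion S L a b) : opM S b = S ∆ Icc a b := by
  rw [opM, e.tauM_eq, itv_of_ge e.lt.le, symmd_eq_symmDiff]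

end IsUpperExcursion

end

theorem suppm_op_facts_general (m : ℤ) (S : Finset ℤ) (j : ℤ)
    (hj : j ∈ suppm m S) :
    (tauP S j ∈ suppm (m + 1) (opP S j) ∧
     suppm (m + 1) (opP S j) = insert (tauP S j) (suppm (m + 1) S) ∧
     tauP S j ∉ suppm (m + 1) S ∧
     suppm m (opP S j) = (suppm m S).erase j ∧
     tauM (opP S j) (tauP S j) = j) ∧
    (tauM S j ∈ suppm (m - 1) (opM S j) ∧
     suppm (m - 1) (opM S j) = insert (tauM S j) (suppm (m - 1) S) ∧
     tauM S j ∉ suppm (m - 1) S ∧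
     suppm m (opM S j) = (suppm m S).erase j ∧
     tauP (opM S j) (tauM S j) = j) := by
  obtain ⟨hjS, hjm⟩ := mem_suppm.1 hj
  obtain ⟨t, hlow⟩ := exists_isLowerExcursion hjS
  obtain ⟨s, hup⟩ := exists_isUpperExcursion hjS
  rw [hjm] at hlow hup
  have hlow_sub := hlow.suppm_sub_one_symmDiff
  rw [add_sub_cancel_right] at hlow_sub
  have hflip := hup.symmDiff
  have hflip_supp := hflip.suppm_symmDiff
  have hflip_sub := hflip.suppm_sub_one_symmDiff
  rw [symmDiff_symmDiff_cancel_right] at hflip_supp hflip_sub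
  rw [hlow.opP_eq, hlow.tauP_eq, hup.opM_eq, hup.tauM_eq, hlow.suppm_symmDiff]
  refine ⟨⟨Finset.mem_insert_self _ _, rfl, hlow.right_notMem_suppm,
    hlow_sub, hlow.symmDiff.tauM_eq⟩, ⟨hflip.left_mem_suppm, ?_, ?_, ?_, hflip.tauP_eq⟩⟩
  · rw [hflip_sub, Finset.insert_erase hflip.left_mem_suppm]
  · rw [hflip_sub]
    exact Finset.notMem_erase _ _
  · rw [hflip_supp, Finset.erase_insert hflip.right_notMem_suppm]

/-- for `m > 1` and `j ∈ supp_m(𝐧)`, for each sign `±`: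
`τ^±(j) ∈ supp_{m±1}(𝐧^±(j))`; `supp_{m±1}(𝐧^±(j))` is the disjoint union of
`supp_{m±1}(𝐧)` and `{τ^±(j)}`; `supp_m(𝐧^±(j)) = supp_m(𝐧) \ {j}`; and
`τ^∓_{𝐧^±(j)}(τ^±_𝐧(j)) = j`. -/
theorem suppm_op_facts (m : ℤ) (hm : 1 < m) (S : Finset ℤ) (j : ℤ)
    (hj : j ∈ suppm m S) :
    (tauP S j ∈ suppm (m + 1) (opP S j) ∧
     suppm (m + 1) (opP S j) = insert (tauP S j) (suppm (m + 1) S) ∧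
     tauP S j ∉ suppm (m + 1) S ∧
     suppm m (opP S j) = (suppm m S).erase j ∧
     tauM (opP S j) (tauP S j) = j) ∧
    (tauM S j ∈ suppm (m - 1) (opM S j) ∧
     suppm (m - 1) (opM S j) = insert (tauM S j) (suppm (m - 1) S) ∧
     tauM S j ∉ suppm (m - 1) S ∧
     suppm m (opM S j) = (suppm m S).erase j ∧
     tauP (opM S j) (tauM S j) = j) :=
  suppm_op_facts_general m S j hj
end

section
/- (Type D_n.) The cardinality of J_{k,r} satisfies |J_{k,r}| = Σ 2^{|supp⁺(𝐣)|}, where the sum runs over all 𝐣 ∈ J_{k,r} with supp⁻(𝐣) = ∅. -/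
open Finset

@[simp]
lemma suppm_empty (m : ℤ) : suppm m ∅ = ∅ := rfl

lemma iotaF_insert_of_lt {S : Finset ℤ} {b x : ℤ} (hx : x < b) :
    iotaF (insert b S) x = iotaF S x := by
  rw [iotaF, filter_insert, if_neg (not_le.mpr hx), iotaF]

lemma iotaF_insert_self {S : Finset ℤ} {b : ℤ} (hb : ∀ x ∈ S, x < b) :
    iotaF (insert b S) b = S.card + 1 := by
  rw [iotaF, filter_insert, if_pos le_rfl, filter_true_of_mem fun x hx => (hb x hx).le,
    card_insert_of_notMem fun h => lt_irrefl b (hb b h)]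

lemma suppm_insert_of_forall_lt {S : Finset ℤ} {b : ℤ} (m : ℤ) (hb : ∀ x ∈ S, x < b) :
    suppm m (insert b S) =
      if 2 * ((S.card : ℤ) + 1) = b - m then insert b (suppm m S) else suppm m S := by
  have hS : S.filter (fun j => 2 * (iotaF (insert b S) j : ℤ) = j - m) = suppm m S :=
    filter_congr fun j hj => by rw [iotaF_insert_of_lt (hb j hj)]
  rw [suppm, filter_insert, hS, iotaF_insert_self hb]
  push_cast
  rfl

def dWeight (N : ℤ) (k : ℕ) (S : Finset ℤ) : ℕ :=
  if S.card = k ∧ suppm (N + 1) S = ∅ then 2 ^ (suppm N S).card else 0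

def dFactor (d t k : ℕ) : ℕ :=
  if t = 2 * k + d + 2 then 0 else if t = 2 * k + d + 1 then 2 else 1

lemma dWeight_empty (N : ℤ) (k : ℕ) : dWeight N k ∅ = if k = 0 then 1 else 0 := by
  simp [dWeight, eq_comm]

lemma dWeight_zero (N : ℤ) (S : Finset ℤ) : dWeight N 0 S = if S = ∅ then 1 else 0 := by
  by_cases hS : S = ∅ <;> simp [hS, dWeight]

lemma dWeight_insert_of_forall_lt {S : Finset ℤ} {a : ℤ} {d t k : ℕ}
    (hS : ∀ x ∈ S, x < a + t + 1) :
    dWeight (a + d) (k + 1) (insert (a + t + 1) S) = dFactor d t k * dWeight (a + d) k S := by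
  have hb : a + t + 1 ∉ S := fun h => lt_irrefl _ (hS _ h)
  have hminus : 2 * ((S.card : ℤ) + 1) = a + t + 1 - (a + d + 1) ↔ t = 2 * S.card + d + 2 := by
    omega
  have hplus : 2 * ((S.card : ℤ) + 1) = a + t + 1 - (a + d) ↔ t = 2 * S.card + d + 1 := by
    omega
  unfold dWeight dFactor
  rw [card_insert_of_notMem hb, suppm_insert_of_forall_lt _ hS, suppm_insert_of_forall_lt _ hS]
  simp only [hminus, hplus, add_left_inj]
  rcases eq_or_ne S.card k with rfl | hk
  · have hbN : a + t + 1 ∉ suppm (a + d) S := fun h => hb (mem_filter.mp h).1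
    split_ifs <;> simp_all [pow_succ, mul_comm]
  · simp [hk]

noncomputable def dSum (a : ℤ) (d t k : ℕ) : ℕ :=
  ∑ S ∈ (Icc (a + 1) (a + t)).powerset, dWeight (a + d) k S

lemma dSum_zero_left (a : ℤ) (d k : ℕ) : dSum a d 0 k = if k = 0 then 1 else 0 := by
  rw [dSum, Nat.cast_zero, add_zero, Icc_eq_empty (by omega), powerset_empty, sum_singleton,
    dWeight_empty]

lemma dSum_zero_right (a : ℤ) (d t : ℕ) : dSum a d t 0 = 1 := by
  simp only [dSum, dWeight_zero, sum_ite_eq', empty_mem_powerset, if_true]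

lemma dSum_succ_succ (a : ℤ) (d t k : ℕ) :
    dSum a d (t + 1) (k + 1) = dSum a d t (k + 1) + dFactor d t k * dSum a d t k := by
  have hIcc : Icc (a + 1) (a + (t + 1 : ℕ)) = insert (a + t + 1) (Icc (a + 1) (a + t)) := by
    ext x; simp only [mem_Icc, mem_insert]; omega
  have hb : a + t + 1 ∉ Icc (a + 1) (a + t) := by simp
  rw [dSum, hIcc, sum_powerset_insert hb, dSum, dSum, mul_sum]
  refine congrArg _ (sum_congr rfl fun S hS => dWeight_insert_of_forall_lt fun x hx => ?_)
  have := mem_Icc.mp (mem_powerset.mp hS hx)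
  omega

def dClosed (d t k : ℕ) : ℕ :=
  t.choose k + if t ≤ 2 * k + d then t.choose (k + d + 1) else 0

lemma dClosed_zero_left (d k : ℕ) : dClosed d 0 k = if k = 0 then 1 else 0 := by
  cases k <;> simp [dClosed]

lemma dClosed_zero_right (d t : ℕ) : dClosed d t 0 = 1 := by
  rw [dClosed, Nat.choose_zero_right, add_eq_left, ite_eq_right_iff]
  exact fun h => Nat.choose_eq_zero_of_lt (by omega)

lemma dClosed_succ_succ (d t k : ℕ) :
    dClosed d (t + 1) (k + 1) = dClosed d t (k + 1) + dFactor d t k * dClosed d t k := by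
  unfold dClosed dFactor
  have pascal := Nat.choose_succ_succ' t
  rw [add_right_comm k 1 d, pascal, pascal]
  obtain ht | ht | ht | ht :
      t < 2 * k + d + 1 ∨ t = 2 * k + d + 1 ∨ t = 2 * k + d + 2 ∨ 2 * k + d + 2 < t := by omega
  · simp only [show t + 1 ≤ 2 * (k + 1) + d by omega, show t ≤ 2 * (k + 1) + d by omega,
      show t ≤ 2 * k + d by omega, show t ≠ 2 * k + d + 2 by omega,
      show t ≠ 2 * k + d + 1 by omega, if_true, if_false, one_mul]
    ring
  · have hsymm : t.choose (k + d + 1) = t.choose k := Nat.choose_symm_of_eq_add (by omega)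
    simp only [show t + 1 ≤ 2 * (k + 1) + d by omega, show t ≤ 2 * (k + 1) + d by omega,
      show ¬t ≤ 2 * k + d by omega, show t ≠ 2 * k + d + 2 by omega, ht.symm, if_true,
      if_false, hsymm]
    ring
  · have hsymm : t.choose (k + d + 2) = t.choose k := Nat.choose_symm_of_eq_add (by omega)
    simp only [show ¬t + 1 ≤ 2 * (k + 1) + d by omega, show t ≤ 2 * (k + 1) + d by omega,
      ht.symm, if_true, if_false, hsymm]
    ring
  · simp only [show ¬t + 1 ≤ 2 * (k + 1) + d by omega, show ¬t ≤ 2 * (k + 1) + d by omega,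
      show ¬t ≤ 2 * k + d by omega, show t ≠ 2 * k + d + 2 by omega,
      show t ≠ 2 * k + d + 1 by omega, if_false, one_mul]
    ring

lemma dSum_eq_dClosed (a : ℤ) (d t k : ℕ) : dSum a d t k = dClosed d t k := by
  induction t generalizing k with
  | zero => rw [dSum_zero_left, dClosed_zero_left]
  | succ t ih =>
    cases k with
    | zero => rw [dSum_zero_right, dClosed_zero_right]
    | succ k => rw [dSum_succ_succ, dClosed_succ_succ, ih, ih]

theorem card_Jkr_D_general (n i r M k : ℕ) (N : ℤ) (hi : 1 < i)
    (hin : i ≤ n - 2) (hri : r ≤ i)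
    (hM : M = (i - r) / 2) (hk : k ≤ M) (hN : N = (n : ℤ) - (i : ℤ) + (r : ℤ) - 2) :
    ((Finset.Icc ((r : ℤ) + 1) ((n : ℤ) - 1)).powerset.filter
        (fun S => S.card = k)).card =
      ∑ S ∈ (Finset.Icc ((r : ℤ) + 1) ((n : ℤ) - 1)).powerset.filter
          (fun S => S.card = k ∧ suppm (N + 1) S = ∅),
        2 ^ (suppm N S).card := by
  have hNd : N = r + (n - i - 2 : ℕ) := by omega
  have hlast : (n : ℤ) - 1 = r + (n - 1 - r : ℕ) := by omega
  have hsum : ∑ S ∈ (Icc ((r : ℤ) + 1) (n - 1)).powerset.filter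
      (fun S => S.card = k ∧ suppm (N + 1) S = ∅), 2 ^ (suppm N S).card =
      dSum r (n - i - 2) (n - 1 - r) k := by
    rw [sum_filter, dSum, hlast, hNd]
    rfl
  rw [hsum, dSum_eq_dClosed, dClosed, if_neg (by omega), add_zero, ← powersetCard_eq_filter,
    card_powersetCard, Int.card_Icc]
  congr 1
  omega

/-- type D_n: with `N = n - i + r - 2`, `supp⁺ = supp_N`,
`supp⁻ = supp_{N+1}`, and `J_{k,r}` the collection of `k`-element subsets of
`{r+1, …, n-1}` (identified with strictly increasing sequences
`r < j_1 < ⋯ < j_k ≤ n-1`), one has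
`|J_{k,r}| = Σ_{𝐣 ∈ J_{k,r}, supp⁻(𝐣) = ∅} 2^{|supp⁺(𝐣)|}`. -/
theorem card_Jkr_D (n i r M k : ℕ) (N : ℤ) (hn : 4 ≤ n) (hi : 1 < i)
    (hin : i ≤ n - 2) (hri : r ≤ i) (hpar : r % 2 = i % 2)
    (hM : M = (i - r) / 2) (hk : k ≤ M) (hN : N = (n : ℤ) - (i : ℤ) + (r : ℤ) - 2) :
    ((Finset.Icc ((r : ℤ) + 1) ((n : ℤ) - 1)).powerset.filter
        (fun S => S.card = k)).card =
      ∑ S ∈ (Finset.Icc ((r : ℤ) + 1) ((n : ℤ) - 1)).powerset.filter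
          (fun S => S.card = k ∧ suppm (N + 1) S = ∅),
        2 ^ (suppm N S).card :=
  card_Jkr_D_general n i r M k N hi hin hri hM hk hN
end
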